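/- arXiv:1112.0347 — 8 statements merged into one kernel-verified Lean document; each statement's English description precedes it below -/
import Mathlib

section
/- Approximable mappings between domain prelocales are closed under relational composition, and the relation id_A given by a id_A b ⟺ a ≤_A b is an identity for this composition; hence domain prelocales and approximable mappings form a category. -/
/-- A coherent prelocale: a preordered set with distributive-lattice structure
up to the induced equivalence. -/
structure Prelocale (α : Type*) where
  le : α → α → Prop
  bot : α
  top : α
  sup : α → α → α
  inf : α → α → α
  le_refl : ∀ a, le a a
  le_trans : ∀ a b c, le a b → le b c → le a c
  bot_le : ∀ a, le bot a
  sup_le : ∀ a b c, le a c → le b c → le (sup a b) c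
  le_sup_left : ∀ a b, le a (sup a b)
  le_sup_right : ∀ a b, le b (sup a b)
  le_top : ∀ a, le a top
  le_inf : ∀ a b c, le a b → le a c → le a (inf b c)
  inf_le_left : ∀ a b, le (inf a b) a
  inf_le_right : ∀ a b, le (inf a b) b
  distrib : ∀ a b c, le (inf a (sup b c)) (sup (inf a b) (inf a c))

namespace Prelocale

variable {α : Type*}

/-- The equivalence `a = b` induced by mutual entailment. -/
def eqv (A : Prelocale α) (a b : α) : Prop := A.le a b ∧ A.le b a

/-- `a` is prime. -/
def prime (A : Prelocale α) (a : α) : Prop :=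
  ∀ b c, A.le a (A.sup b c) → A.le a b ∨ A.le a c

/-- `a` is consistent. -/
def con (A : Prelocale α) (a : α) : Prop := ¬ A.eqv a A.bot

/-- Finite joins. -/
def joinList (A : Prelocale α) : List α → α
  | [] => A.bot
  | a :: l => A.sup a (A.joinList l)

end Prelocale

/-- A domain prelocale: a coherent prelocale satisfying (d1)–(d3). -/
structure DomainPrelocale (α : Type*) extends Prelocale α where
  d1 : ∀ a, ∃ l : List α, (∀ b ∈ l, toPrelocale.prime b) ∧
        toPrelocale.eqv a (toPrelocale.joinList l)
  d2 : toPrelocale.prime top ∧ toPrelocale.con top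
  d3 : ∀ a b, toPrelocale.prime a → toPrelocale.prime b →
        toPrelocale.prime (inf a b)

/-- Approximable mappings `R : A → B` between prelocales (axioms r1–r7). -/
def IsApproxMap {α β : Type*} (A : Prelocale α) (B : Prelocale β)
    (R : α → β → Prop) : Prop :=
  (∀ a, R a B.top) ∧
  (∀ a b c, R a b → R a c → R a (B.inf b c)) ∧
  (∀ b, R A.bot b) ∧
  (∀ a b c, R a c → R b c → R (A.sup a b) c) ∧
  (∀ a a' b' c, A.le a a' → R a' b' → B.le b' c → R a c) ∧
  (∀ a, R a B.bot → A.eqv a A.bot) ∧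
  (∀ a b c, A.prime a → R a (B.sup b c) → R a b ∨ R a c)

/-- Relational composition. -/
def RelComp {α β γ : Type*} (R : α → β → Prop) (S : β → γ → Prop)
    (a : α) (c : γ) : Prop :=
  ∃ b, R a b ∧ S b c

/-- The identity approximable mapping on `A`. -/
def idMap {α : Type*} (A : Prelocale α) (a b : α) : Prop := A.le a b

/-! The only approximable-mapping axiom that is not preserved by composition for purely
formal reasons is primality. If `a` is prime and `a R b S (c ∨ c')`, write `b` as a join of
primes of `B`; each of them is sent by `S` below `c` or below `c'`, so collecting them gives
`b ≤ b₁ ∨ b₂` with `b₁ S c` and `b₂ S c'`, and primality of `R` at `a` chooses one of the two. -/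

namespace Prelocale

variable {α : Type*} (A : Prelocale α)

theorem le_sup_of_le_left {a b c : α} (h : A.le a b) : A.le a (A.sup b c) :=
  A.le_trans _ _ _ h (A.le_sup_left b c)

theorem le_sup_of_le_right {a b c : α} (h : A.le a c) : A.le a (A.sup b c) :=
  A.le_trans _ _ _ h (A.le_sup_right b c)

theorem sup_le_sup {a a' b b' : α} (ha : A.le a a') (hb : A.le b b') :
    A.le (A.sup a b) (A.sup a' b') :=
  A.sup_le _ _ _ (A.le_sup_of_le_left ha) (A.le_sup_of_le_right hb)

theorem le_joinList_of_mem {p : α} : ∀ {l : List α}, p ∈ l → A.le p (A.joinList l)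
  | _ :: _, .head _ => A.le_sup_left _ _
  | _ :: _, .tail _ h => A.le_sup_of_le_right (le_joinList_of_mem h)

end Prelocale

namespace IsApproxMap

variable {α β γ : Type*} {A : Prelocale α} {B : Prelocale β} {R : α → β → Prop}

theorem rel_top (hR : IsApproxMap A B R) (a : α) : R a B.top := hR.1 a

theorem rel_inf (hR : IsApproxMap A B R) {a : α} {b c : β} (hb : R a b) (hc : R a c) :
    R a (B.inf b c) :=
  hR.2.1 a b c hb hc

theorem bot_rel (hR : IsApproxMap A B R) (b : β) : R A.bot b := hR.2.2.1 b

theorem sup_rel (hR : IsApproxMap A B R) {a a' : α} {b : β} (ha : R a b) (ha' : R a' b) :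
    R (A.sup a a') b :=
  hR.2.2.2.1 a a' b ha ha'

theorem mono (hR : IsApproxMap A B R) {a a' : α} {b b' : β} (ha : A.le a a') (h : R a' b)
    (hb : B.le b b') : R a b' :=
  hR.2.2.2.2.1 a a' b b' ha h hb

theorem mono_left (hR : IsApproxMap A B R) {a a' : α} {b : β} (ha : A.le a a') (h : R a' b) :
    R a b :=
  hR.mono ha h (B.le_refl b)

theorem mono_right (hR : IsApproxMap A B R) {a : α} {b b' : β} (h : R a b) (hb : B.le b b') :
    R a b' :=
  hR.mono (A.le_refl a) h hb

theorem eqv_bot_of_rel_bot (hR : IsApproxMap A B R) {a : α} (h : R a B.bot) : A.eqv a A.bot :=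
  hR.2.2.2.2.2.1 a h

theorem rel_or_rel_of_prime (hR : IsApproxMap A B R) {a : α} {b c : β} (ha : A.prime a)
    (h : R a (B.sup b c)) : R a b ∨ R a c :=
  hR.2.2.2.2.2.2 a b c ha h

theorem exists_joinList_le_sup_of_forall_mem (hR : IsApproxMap A B R) {b c : β} :
    ∀ {l : List α}, (∀ p ∈ l, R p b ∨ R p c) →
      ∃ a₁ a₂, A.le (A.joinList l) (A.sup a₁ a₂) ∧ R a₁ b ∧ R a₂ c
  | [], _ => ⟨A.bot, A.bot, A.bot_le _, hR.bot_rel b, hR.bot_rel c⟩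
  | p :: l, h => by
    obtain ⟨a₁, a₂, hle, h₁, h₂⟩ :=
      hR.exists_joinList_le_sup_of_forall_mem fun q hq => h q (List.mem_cons_of_mem p hq)
    rcases h p List.mem_cons_self with hp | hp
    · refine ⟨A.sup p a₁, a₂, A.sup_le _ _ _ ?_ ?_, hR.sup_rel hp h₁, h₂⟩
      · exact A.le_sup_of_le_left (A.le_sup_left p a₁)
      · exact A.le_trans _ _ _ hle (A.sup_le_sup (A.le_sup_right p a₁) (A.le_refl a₂))
    · refine ⟨a₁, A.sup p a₂, A.sup_le _ _ _ ?_ ?_, h₁, hR.sup_rel hp h₂⟩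
      · exact A.le_sup_of_le_right (A.le_sup_left p a₂)
      · exact A.le_trans _ _ _ hle (A.sup_le_sup (A.le_refl a₁) (A.le_sup_right p a₂))

theorem exists_le_sup_of_rel_sup {A : DomainPrelocale α} (hR : IsApproxMap A.toPrelocale B R)
    {a : α} {b c : β} (h : R a (B.sup b c)) :
    ∃ a₁ a₂, A.le a (A.sup a₁ a₂) ∧ R a₁ b ∧ R a₂ c := by
  obtain ⟨l, hprime, ha⟩ := A.d1 a
  have hsplit : ∀ p ∈ l, R p b ∨ R p c := fun p hp =>
    hR.rel_or_rel_of_prime (hprime p hp)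
      (hR.mono_left (A.le_trans _ _ _ (A.le_joinList_of_mem hp) ha.2) h)
  obtain ⟨a₁, a₂, hle, h₁, h₂⟩ := hR.exists_joinList_le_sup_of_forall_mem hsplit
  exact ⟨a₁, a₂, A.le_trans _ _ _ ha.1 hle, h₁, h₂⟩

theorem relComp {B : DomainPrelocale β} {C : Prelocale γ} {S : β → γ → Prop}
    (hR : IsApproxMap A B.toPrelocale R) (hS : IsApproxMap B.toPrelocale C S) :
    IsApproxMap A C (RelComp R S) := by
  refine ⟨?_, ?_, ?_, ?_, ?_, ?_, ?_⟩
  · exact fun a => ⟨B.top, hR.rel_top a, hS.rel_top _⟩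
  · rintro a c c' ⟨b, hab, hbc⟩ ⟨b', hab', hbc'⟩
    exact ⟨B.inf b b', hR.rel_inf hab hab',
      hS.rel_inf (hS.mono_left (B.inf_le_left b b') hbc)
        (hS.mono_left (B.inf_le_right b b') hbc')⟩
  · exact fun c => ⟨B.bot, hR.bot_rel _, hS.bot_rel c⟩
  · rintro a a' c ⟨b, hab, hbc⟩ ⟨b', hab', hbc'⟩
    exact ⟨B.sup b b', hR.sup_rel (hR.mono_right hab (B.le_sup_left b b'))
      (hR.mono_right hab' (B.le_sup_right b b')), hS.sup_rel hbc hbc'⟩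
  · rintro a a' c c' ha ⟨b, hab, hbc⟩ hc
    exact ⟨b, hR.mono_left ha hab, hS.mono_right hbc hc⟩
  · rintro a ⟨b, hab, hbc⟩
    exact hR.eqv_bot_of_rel_bot (hR.mono_right hab (hS.eqv_bot_of_rel_bot hbc).1)
  · rintro a c c' ha ⟨b, hab, hbc⟩
    obtain ⟨b₁, b₂, hb, h₁, h₂⟩ := hS.exists_le_sup_of_rel_sup hbc
    exact (hR.rel_or_rel_of_prime ha (hR.mono_right hab hb)).imp
      (fun h => ⟨b₁, h, h₁⟩) (fun h => ⟨b₂, h, h₂⟩)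

theorem relComp_idMap (hR : IsApproxMap A B R) : RelComp R (idMap B) = R := by
  funext a b
  exact propext ⟨fun ⟨_, h, hb⟩ => hR.mono_right h hb, fun h => ⟨b, h, B.le_refl b⟩⟩

theorem idMap_relComp (hR : IsApproxMap A B R) : RelComp (idMap A) R = R := by
  funext a b
  exact propext ⟨fun ⟨_, ha, h⟩ => hR.mono_left ha h, fun h => ⟨a, A.le_refl a, h⟩⟩

end IsApproxMap

theorem isApproxMap_idMap {α : Type*} (A : Prelocale α) : IsApproxMap A A (idMap A) :=
  ⟨A.le_top, A.le_inf, A.bot_le, A.sup_le,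
    fun _ _ _ _ ha h hb => A.le_trans _ _ _ ha (A.le_trans _ _ _ h hb),
    fun a h => ⟨h, A.bot_le a⟩, fun _ _ _ ha h => ha _ _ h⟩

theorem relComp_assoc {α β γ δ : Type*} (R : α → β → Prop) (S : β → γ → Prop)
    (Q : γ → δ → Prop) : RelComp (RelComp R S) Q = RelComp R (RelComp S Q) :=
  Relation.comp_assoc

theorem approx_maps_form_category_general {α β γ δ : Type*}
    (A : DomainPrelocale α) (B : DomainPrelocale β) (C : DomainPrelocale γ)
    (R : α → β → Prop) (S : β → γ → Prop) (Q : γ → δ → Prop) :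
    (IsApproxMap A.toPrelocale B.toPrelocale R →
      IsApproxMap B.toPrelocale C.toPrelocale S →
      IsApproxMap A.toPrelocale C.toPrelocale (RelComp R S)) ∧
    IsApproxMap A.toPrelocale A.toPrelocale (idMap A.toPrelocale) ∧
    (IsApproxMap A.toPrelocale B.toPrelocale R →
      RelComp R (idMap B.toPrelocale) = R ∧
      RelComp (idMap A.toPrelocale) R = R) ∧
    RelComp (RelComp R S) Q = RelComp R (RelComp S Q) :=
  ⟨fun hR hS => hR.relComp hS, isApproxMap_idMap _,
    fun hR => ⟨hR.relComp_idMap, hR.idMap_relComp⟩, relComp_assoc R S Q⟩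

/-- Approximable mappings between domain prelocales are closed under relational
composition; `id_A` given by entailment is an approximable mapping and is an
identity for composition; composition is associative.  Hence domain prelocales
and approximable mappings form a category. -/
theorem approx_maps_form_category {α β γ δ : Type*}
    (A : DomainPrelocale α) (B : DomainPrelocale β) (C : DomainPrelocale γ)
    (D : DomainPrelocale δ)
    (R : α → β → Prop) (S : β → γ → Prop) (Q : γ → δ → Prop) :
    (IsApproxMap A.toPrelocale B.toPrelocale R →
      IsApproxMap B.toPrelocale C.toPrelocale S →
      IsApproxMap A.toPrelocale C.toPrelocale (RelComp R S)) ∧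
    IsApproxMap A.toPrelocale A.toPrelocale (idMap A.toPrelocale) ∧
    (IsApproxMap A.toPrelocale B.toPrelocale R →
      RelComp R (idMap B.toPrelocale) = R ∧
      RelComp (idMap A.toPrelocale) R = R) ∧
    RelComp (RelComp R S) Q = RelComp R (RelComp S Q) :=
  approx_maps_form_category_general A B C R S Q
end

section
/- For a domain prelocale A, the set Â of prime proper filters of A, ordered by inclusion, is a Scott domain: it has a least element (the filter generated by 1), is closed under directed unions, the principal filters of consistent primes form a basis of finite elements, and this basis is closed under bounded finite joins. -/
namespace Prelocale

variable {α : Type*}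

/-- Prime proper filters of a prelocale. -/
def IsPPF (A : Prelocale α) (x : Set α) : Prop :=
  (∀ a ∈ x, A.con a) ∧
  A.top ∈ x ∧
  (∀ a b, a ∈ x → b ∈ x → A.inf a b ∈ x) ∧
  (∀ a b, a ∈ x → A.le a b → b ∈ x) ∧
  (∀ a b, A.sup a b ∈ x → a ∈ x ∨ b ∈ x)

/-- The principal filter of an element. -/
def princ (A : Prelocale α) (p : α) : Set α := {a | A.le p a}

end Prelocale

open Prelocale

namespace Prelocale

variable {α : Type*} {A : Prelocale α} {x : Set α} {p q : α}

theorem IsPPF.con_of_mem (hx : IsPPF A x) {a : α} (ha : a ∈ x) : A.con a := hx.1 a ha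

theorem IsPPF.top_mem (hx : IsPPF A x) : A.top ∈ x := hx.2.1

theorem IsPPF.inf_mem (hx : IsPPF A x) {a b : α} (ha : a ∈ x) (hb : b ∈ x) :
    A.inf a b ∈ x :=
  hx.2.2.1 a b ha hb

theorem IsPPF.mem_of_le (hx : IsPPF A x) {a b : α} (ha : a ∈ x) (hab : A.le a b) : b ∈ x :=
  hx.2.2.2.1 a b ha hab

theorem IsPPF.mem_or_mem (hx : IsPPF A x) {a b : α} (h : A.sup a b ∈ x) : a ∈ x ∨ b ∈ x :=
  hx.2.2.2.2 a b h

theorem IsPPF.princ_subset (hx : IsPPF A x) (hp : p ∈ x) : princ A p ⊆ x :=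
  fun _ hpa => hx.mem_of_le hp hpa

theorem princ_subset_princ (h : A.le p q) : princ A q ⊆ princ A p :=
  fun _ hqa => A.le_trans _ _ _ h hqa

theorem isPPF_princ (hp : A.prime p) (hc : A.con p) : IsPPF A (princ A p) :=
  ⟨fun _ hpa hbot => hc ⟨A.le_trans _ _ _ hpa hbot.1, A.bot_le p⟩, A.le_top p,
    fun _ _ => A.le_inf _ _ _, fun _ _ => A.le_trans _ _ _, hp⟩

theorem isPPF_sUnion {𝒟 : Set (Set α)} (hne : 𝒟.Nonempty) (hdir : DirectedOn (· ⊆ ·) 𝒟)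
    (h𝒟 : ∀ x ∈ 𝒟, IsPPF A x) : IsPPF A (⋃₀ 𝒟) := by
  obtain ⟨x₀, hx₀⟩ := hne
  refine ⟨?_, ⟨x₀, hx₀, (h𝒟 x₀ hx₀).top_mem⟩, ?_, ?_, ?_⟩
  · rintro a ⟨x, hx, ha⟩
    exact (h𝒟 x hx).con_of_mem ha
  · rintro a b ⟨x, hx, ha⟩ ⟨y, hy, hb⟩
    obtain ⟨z, hz, hxz, hyz⟩ := hdir x hx y hy
    exact ⟨z, hz, (h𝒟 z hz).inf_mem (hxz ha) (hyz hb)⟩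
  · rintro a b ⟨x, hx, ha⟩ hab
    exact ⟨x, hx, (h𝒟 x hx).mem_of_le ha hab⟩
  · rintro a b ⟨x, hx, hab⟩
    exact ((h𝒟 x hx).mem_or_mem hab).imp (fun ha => ⟨x, hx, ha⟩) (fun hb => ⟨x, hx, hb⟩)

theorem exists_princ_subset_of_subset_sUnion {𝒟 : Set (Set α)} (h𝒟 : ∀ x ∈ 𝒟, IsPPF A x)
    (hsub : princ A p ⊆ ⋃₀ 𝒟) : ∃ x ∈ 𝒟, princ A p ⊆ x := by
  obtain ⟨x, hx, hpx⟩ := hsub (A.le_refl p)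
  exact ⟨x, hx, (h𝒟 x hx).princ_subset hpx⟩

theorem le_joinList {a : α} : ∀ {l : List α}, a ∈ l → A.le a (A.joinList l)
  | _ :: _, .head _ => A.le_sup_left _ _
  | _ :: _, .tail _ h => A.le_trans _ _ _ (le_joinList h) (A.le_sup_right _ _)

theorem IsPPF.exists_mem_of_joinList_mem (hx : IsPPF A x) :
    ∀ {l : List α}, A.joinList l ∈ x → ∃ p ∈ l, p ∈ x
  | [], h => absurd ⟨A.le_refl _, A.bot_le _⟩ (hx.con_of_mem h)
  | a :: _, h => (hx.mem_or_mem h).elim (fun ha => ⟨a, List.mem_cons_self, ha⟩)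
      fun hl => let ⟨p, hp, hpx⟩ := hx.exists_mem_of_joinList_mem hl
        ⟨p, List.mem_cons_of_mem _ hp, hpx⟩

end Prelocale

namespace DomainPrelocale

variable {α : Type*} (A : DomainPrelocale α) {x : Set α}

theorem mem_iff_exists_prime_le (hx : IsPPF A.toPrelocale x) (a : α) :
    a ∈ x ↔ ∃ p ∈ x, A.prime p ∧ A.le p a := by
  refine ⟨fun ha => ?_, fun ⟨p, hpx, _, hpa⟩ => hx.mem_of_le hpx hpa⟩
  obtain ⟨l, hl, hal, hla⟩ := A.d1 a
  obtain ⟨p, hpl, hpx⟩ := hx.exists_mem_of_joinList_mem (hx.mem_of_le ha hal)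
  exact ⟨p, hpx, hl p hpl, A.le_trans _ _ _ (le_joinList hpl) hla⟩

end DomainPrelocale

/-- For a domain prelocale `A`, the poset `Â` of prime proper filters ordered by
inclusion is a Scott domain: the filter generated by `1` is a least element;
directed unions of prime proper filters are prime proper filters; the principal
filters of consistent primes are prime proper filters which are finite (compact)
elements and form a basis; and this basis is closed under bounded finite joins. -/
theorem ppf_scott_domain {α : Type*} (A : DomainPrelocale α) :
    -- least element: the filter generated by 1
    (IsPPF A.toPrelocale (princ A.toPrelocale A.top) ∧
      ∀ x, IsPPF A.toPrelocale x → princ A.toPrelocale A.top ⊆ x) ∧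
    -- closure under directed unions
    (∀ 𝒟 : Set (Set α), 𝒟.Nonempty → DirectedOn (· ⊆ ·) 𝒟 →
      (∀ x ∈ 𝒟, IsPPF A.toPrelocale x) → IsPPF A.toPrelocale (⋃₀ 𝒟)) ∧
    -- principal filters of consistent primes are prime proper filters and
    -- are finite (compact) elements
    (∀ p, A.toPrelocale.prime p → A.toPrelocale.con p →
      IsPPF A.toPrelocale (princ A.toPrelocale p) ∧
      (∀ 𝒟 : Set (Set α), 𝒟.Nonempty → DirectedOn (· ⊆ ·) 𝒟 →
        (∀ x ∈ 𝒟, IsPPF A.toPrelocale x) →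
        princ A.toPrelocale p ⊆ ⋃₀ 𝒟 → ∃ x ∈ 𝒟, princ A.toPrelocale p ⊆ x)) ∧
    -- they form a basis: every prime proper filter is determined by the
    -- principal filters of the primes it contains
    (∀ x, IsPPF A.toPrelocale x →
      ∀ a, a ∈ x ↔ ∃ p ∈ x, A.toPrelocale.prime p ∧ A.toPrelocale.le p a) ∧
    -- the basis is closed under bounded finite joins
    (∀ p q, A.toPrelocale.prime p → A.toPrelocale.con p →
      A.toPrelocale.prime q → A.toPrelocale.con q →
      (∃ x, IsPPF A.toPrelocale x ∧ p ∈ x ∧ q ∈ x) →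
      A.toPrelocale.prime (A.inf p q) ∧ A.toPrelocale.con (A.inf p q) ∧
      IsPPF A.toPrelocale (princ A.toPrelocale (A.inf p q)) ∧
      princ A.toPrelocale p ⊆ princ A.toPrelocale (A.inf p q) ∧
      princ A.toPrelocale q ⊆ princ A.toPrelocale (A.inf p q) ∧
      (∀ y, IsPPF A.toPrelocale y →
        princ A.toPrelocale p ⊆ y → princ A.toPrelocale q ⊆ y →
        princ A.toPrelocale (A.inf p q) ⊆ y)) := by
  refine ⟨⟨isPPF_princ A.d2.1 A.d2.2, fun x hx => hx.princ_subset hx.top_mem⟩,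
    fun _ => isPPF_sUnion, fun p hp hc => ⟨isPPF_princ hp hc,
      fun _ _ _ => exists_princ_subset_of_subset_sUnion⟩,
    fun x hx => A.mem_iff_exists_prime_le hx, ?_⟩
  rintro p q hp - hq - ⟨x, hx, hpx, hqx⟩
  have hprime : A.prime (A.inf p q) := A.d3 p q hp hq
  have hcon : A.con (A.inf p q) := hx.con_of_mem (hx.inf_mem hpx hqx)
  exact ⟨hprime, hcon, isPPF_princ hprime hcon, princ_subset_princ (A.inf_le_left p q),
    princ_subset_princ (A.inf_le_right p q), fun y hy hpy hqy =>
      hy.princ_subset (hy.inf_mem (hpy (A.le_refl p)) (hqy (A.le_refl q)))⟩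
end

section
/- The class of domain prelocales under the relation ⊴ is an ω-chain complete partial order: ⊴ is a partial order and every ω-chain A_0 ⊴ A_1 ⊴ ... has a least upper bound given by the componentwise union of carriers, orderings and operations, which is again a domain prelocale. -/
/-- A coherent prelocale carried by a subset of a fixed universe `U`. -/
structure PreLoc (U : Type*) where
  carrier : Set U
  le : carrier → carrier → Prop
  bot : carrier
  top : carrier
  sup : carrier → carrier → carrier
  inf : carrier → carrier → carrier
  le_refl : ∀ a, le a a
  le_trans : ∀ a b c, le a b → le b c → le a c
  bot_le : ∀ a, le bot a
  sup_le : ∀ a b c, le a c → le b c → le (sup a b) c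
  le_sup_left : ∀ a b, le a (sup a b)
  le_sup_right : ∀ a b, le b (sup a b)
  le_top : ∀ a, le a top
  le_inf : ∀ a b c, le a b → le a c → le a (inf b c)
  inf_le_left : ∀ a b, le (inf a b) a
  inf_le_right : ∀ a b, le (inf a b) b
  distrib : ∀ a b c, le (inf a (sup b c)) (sup (inf a b) (inf a c))

namespace PreLoc

variable {U : Type*}

def eqv (A : PreLoc U) (a b : A.carrier) : Prop := A.le a b ∧ A.le b a

def prime (A : PreLoc U) (a : A.carrier) : Prop :=
  ∀ b c, A.le a (A.sup b c) → A.le a b ∨ A.le a c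

def joinList (A : PreLoc U) : List A.carrier → A.carrier
  | [] => A.bot
  | a :: l => A.sup a (A.joinList l)

end PreLoc

/-- A domain prelocale over `U`. -/
structure DomPreLoc (U : Type*) extends PreLoc U where
  d1 : ∀ a, ∃ l : List toPreLoc.carrier,
        (∀ b ∈ l, toPreLoc.prime b) ∧ toPreLoc.eqv a (toPreLoc.joinList l)
  d2 : toPreLoc.prime toPreLoc.top ∧ ¬ toPreLoc.eqv toPreLoc.top toPreLoc.bot
  d3 : ∀ a b, toPreLoc.prime a → toPreLoc.prime b → toPreLoc.prime (toPreLoc.inf a b)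

/-- The relation `A ⊴ B`: `|A| ⊆ |B|` as a subalgebra, entailment in `B` between
`A`-elements agrees with entailment in `A`, and primes of `A` are primes of `B`. -/
def PreLoc.Ext {U : Type*} (A B : PreLoc U) : Prop :=
  ∃ h : A.carrier ⊆ B.carrier,
    (A.bot.1 = B.bot.1) ∧ (A.top.1 = B.top.1) ∧
    (∀ a b : A.carrier, (A.sup a b).1 = (B.sup ⟨a.1, h a.2⟩ ⟨b.1, h b.2⟩).1) ∧
    (∀ a b : A.carrier, (A.inf a b).1 = (B.inf ⟨a.1, h a.2⟩ ⟨b.1, h b.2⟩).1) ∧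
    (∀ a b : A.carrier, A.le a b ↔ B.le ⟨a.1, h a.2⟩ ⟨b.1, h b.2⟩) ∧
    (∀ a : A.carrier, A.prime a → B.prime ⟨a.1, h a.2⟩)

/-- `A ⊴ B` for domain prelocales. -/
def DomPreLoc.Ext {U : Type*} (A B : DomPreLoc U) : Prop :=
  PreLoc.Ext A.toPreLoc B.toPreLoc

-- ==== auxiliary lemmas ====
namespace PreLoc.Ext

variable {U : Type*} {P Q : PreLoc U}

theorem subset (E : P.Ext Q) : P.carrier ⊆ Q.carrier := E.choose

theorem bot_val (E : P.Ext Q) : P.bot.1 = Q.bot.1 := E.choose_spec.1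

theorem top_val (E : P.Ext Q) : P.top.1 = Q.top.1 := E.choose_spec.2.1

theorem sup_val (E : P.Ext Q) (a b : P.carrier) (ha : a.1 ∈ Q.carrier)
    (hb : b.1 ∈ Q.carrier) : (P.sup a b).1 = (Q.sup ⟨a.1, ha⟩ ⟨b.1, hb⟩).1 :=
  E.choose_spec.2.2.1 a b

theorem inf_val (E : P.Ext Q) (a b : P.carrier) (ha : a.1 ∈ Q.carrier)
    (hb : b.1 ∈ Q.carrier) : (P.inf a b).1 = (Q.inf ⟨a.1, ha⟩ ⟨b.1, hb⟩).1 :=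
  E.choose_spec.2.2.2.1 a b

theorem le_iff (E : P.Ext Q) (a b : P.carrier) (ha : a.1 ∈ Q.carrier)
    (hb : b.1 ∈ Q.carrier) : P.le a b ↔ Q.le ⟨a.1, ha⟩ ⟨b.1, hb⟩ :=
  E.choose_spec.2.2.2.2.1 a b

theorem prime_imp (E : P.Ext Q) (a : P.carrier) (ha : a.1 ∈ Q.carrier)
    (h : P.prime a) : Q.prime ⟨a.1, ha⟩ :=
  E.choose_spec.2.2.2.2.2 a h

theorem rfl' (A : PreLoc U) : A.Ext A :=
  ⟨subset_rfl, rfl, rfl, fun _ _ => rfl, fun _ _ => rfl, fun _ _ => Iff.rfl, fun _ h => h⟩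

theorem trans' {A B C : PreLoc U} (h1 : A.Ext B) (h2 : B.Ext C) : A.Ext C := by
  refine ⟨h1.subset.trans h2.subset, h1.bot_val.trans h2.bot_val,
    h1.top_val.trans h2.top_val, ?_, ?_, ?_, ?_⟩
  · intro a b
    exact (h1.sup_val a b (h1.subset a.2) (h1.subset b.2)).trans
      (h2.sup_val _ _ (h2.subset (h1.subset a.2)) (h2.subset (h1.subset b.2)))
  · intro a b
    exact (h1.inf_val a b (h1.subset a.2) (h1.subset b.2)).trans
      (h2.inf_val _ _ (h2.subset (h1.subset a.2)) (h2.subset (h1.subset b.2)))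
  · intro a b
    exact (h1.le_iff a b (h1.subset a.2) (h1.subset b.2)).trans
      (h2.le_iff _ _ (h2.subset (h1.subset a.2)) (h2.subset (h1.subset b.2)))
  · intro a h
    exact h2.prime_imp _ (h2.subset (h1.subset a.2))
      (h1.prime_imp a (h1.subset a.2) h)

-- prime reflection
theorem prime_rev (E : P.Ext Q) (a : P.carrier) (ha : a.1 ∈ Q.carrier)
    (h : Q.prime ⟨a.1, ha⟩) : P.prime a := by
  intro b c hle
  have h1 : Q.le ⟨a.1, ha⟩ ⟨(P.sup b c).1, E.subset (P.sup b c).2⟩ :=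
    (E.le_iff a _ ha _).mp hle
  have h2 : (⟨(P.sup b c).1, E.subset (P.sup b c).2⟩ : Q.carrier) =
      Q.sup ⟨b.1, E.subset b.2⟩ ⟨c.1, E.subset c.2⟩ :=
    Subtype.ext (E.sup_val b c _ _)
  rw [h2] at h1
  rcases h _ _ h1 with h3 | h3
  · exact Or.inl ((E.le_iff a b _ _).mpr h3)
  · exact Or.inr ((E.le_iff a c _ _).mpr h3)

theorem joinList_val (E : P.Ext Q) (l : List P.carrier) :
    (Q.joinList (l.map fun x => ⟨x.1, E.subset x.2⟩)).1 = (P.joinList l).1 := by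
  induction l with
  | nil => exact E.bot_val.symm
  | cons x l ih =>
    show (Q.sup ⟨x.1, E.subset x.2⟩ (Q.joinList (l.map fun x => ⟨x.1, E.subset x.2⟩))).1
      = (P.sup x (P.joinList l)).1
    have ev : Q.joinList (l.map fun x => ⟨x.1, E.subset x.2⟩) =
        ⟨(P.joinList l).1, E.subset (P.joinList l).2⟩ := Subtype.ext ih
    rw [ev]
    exact (E.sup_val x (P.joinList l) (E.subset x.2) (E.subset (P.joinList l).2)).symm

end PreLoc.Ext

theorem preloc_antisymm {U : Type*} {A B : PreLoc U} (h1 : A.Ext B) (h2 : B.Ext A) :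
    A = B := by
  have hc : A.carrier = B.carrier := Set.Subset.antisymm h1.subset h2.subset
  obtain ⟨s1, hb1, ht1, hs1, hi1, hl1, hp1⟩ := h1
  rcases A with ⟨cA, leA, bA, tA, sA, iA, r1, r2, r3, r4, r5, r6, r7, r8, r9, r10, r11⟩
  rcases B with ⟨cB, leB, bB, tB, sB, iB, q1, q2, q3, q4, q5, q6, q7, q8, q9, q10, q11⟩
  dsimp at hc
  subst hc
  dsimp at s1 hb1 ht1 hs1 hi1 hl1 hp1
  have hle : leA = leB := funext fun a => funext fun b => propext (hl1 a b)
  have hbot : bA = bB := Subtype.ext hb1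
  have htop : tA = tB := Subtype.ext ht1
  have hsup : sA = sB := funext fun a => funext fun b => Subtype.ext (hs1 a b)
  have hinf : iA = iB := funext fun a => funext fun b => Subtype.ext (hi1 a b)
  subst hle hbot htop hsup hinf
  rfl

theorem dompreloc_antisymm {U : Type*} {A B : DomPreLoc U} (h1 : A.Ext B)
    (h2 : B.Ext A) : A = B := by
  have h : A.toPreLoc = B.toPreLoc := preloc_antisymm h1 h2
  rcases A with ⟨pA, a1, a2, a3⟩
  rcases B with ⟨pB, b1, b2, b3⟩
  dsimp at h
  subst h
  rfl

-- ==== chain construction ====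
section Chain

variable {U : Type*} (A : ℕ → DomPreLoc U) (hA : ∀ n, (A n).Ext (A (n + 1)))

noncomputable def chLvl (x : ↥(⋃ n, (A n).carrier)) : ℕ :=
  Classical.choose (Set.mem_iUnion.mp x.2)

theorem chLvl_mem (x : ↥(⋃ n, (A n).carrier)) : x.1 ∈ (A (chLvl A x)).carrier :=
  Classical.choose_spec (Set.mem_iUnion.mp x.2)

def chLe (a b : ↥(⋃ n, (A n).carrier)) : Prop :=
  ∃ n, ∃ (ha : a.1 ∈ (A n).carrier) (hb : b.1 ∈ (A n).carrier),
    (A n).le ⟨a.1, ha⟩ ⟨b.1, hb⟩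

include hA

theorem extMono : ∀ {m n : ℕ}, m ≤ n → PreLoc.Ext (A m).toPreLoc (A n).toPreLoc := by
  intro m n h
  induction h with
  | refl => exact PreLoc.Ext.rfl' _
  | step _ ih => exact PreLoc.Ext.trans' ih (hA _)

theorem memMono {m n : ℕ} (h : m ≤ n) {x : U} (hx : x ∈ (A m).carrier) :
    x ∈ (A n).carrier := (extMono A hA h).subset hx

theorem chLe_iff {n : ℕ} (a b : ↥(⋃ n, (A n).carrier)) (ha : a.1 ∈ (A n).carrier)
    (hb : b.1 ∈ (A n).carrier) :
    chLe A a b ↔ (A n).le ⟨a.1, ha⟩ ⟨b.1, hb⟩ := by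
  constructor
  · rintro ⟨m, ha', hb', h⟩
    have h1 : (A (max m n)).le ⟨a.1, memMono A hA (le_max_left m n) ha'⟩
        ⟨b.1, memMono A hA (le_max_left m n) hb'⟩ :=
      ((extMono A hA (le_max_left m n)).le_iff _ _ _ _).mp h
    exact ((extMono A hA (le_max_right m n)).le_iff ⟨a.1, ha⟩ ⟨b.1, hb⟩
      (memMono A hA (le_max_right m n) ha) (memMono A hA (le_max_right m n) hb)).mpr h1
  · intro h
    exact ⟨n, ha, hb, h⟩

noncomputable def chSup (a b : ↥(⋃ n, (A n).carrier)) : ↥(⋃ n, (A n).carrier) :=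
  ⟨((A (max (chLvl A a) (chLvl A b))).sup
      ⟨a.1, memMono A hA (le_max_left _ _) (chLvl_mem A a)⟩
      ⟨b.1, memMono A hA (le_max_right _ _) (chLvl_mem A b)⟩).1,
    Set.mem_iUnion.2 ⟨_, Subtype.prop _⟩⟩

noncomputable def chInf (a b : ↥(⋃ n, (A n).carrier)) : ↥(⋃ n, (A n).carrier) :=
  ⟨((A (max (chLvl A a) (chLvl A b))).inf
      ⟨a.1, memMono A hA (le_max_left _ _) (chLvl_mem A a)⟩
      ⟨b.1, memMono A hA (le_max_right _ _) (chLvl_mem A b)⟩).1,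
    Set.mem_iUnion.2 ⟨_, Subtype.prop _⟩⟩

theorem chSup_val {n : ℕ} (a b : ↥(⋃ n, (A n).carrier)) (ha : a.1 ∈ (A n).carrier)
    (hb : b.1 ∈ (A n).carrier) :
    (chSup A hA a b).1 = ((A n).sup ⟨a.1, ha⟩ ⟨b.1, hb⟩).1 := by
  set m := max (chLvl A a) (chLvl A b) with hm
  have e1 := (extMono A hA (le_max_left m n)).sup_val
    ⟨a.1, memMono A hA (le_max_left _ _) (chLvl_mem A a)⟩
    ⟨b.1, memMono A hA (le_max_right _ _) (chLvl_mem A b)⟩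
    (memMono A hA (le_max_left m n) (memMono A hA (le_max_left _ _) (chLvl_mem A a)))
    (memMono A hA (le_max_left m n) (memMono A hA (le_max_right _ _) (chLvl_mem A b)))
  have e2 := (extMono A hA (le_max_right m n)).sup_val ⟨a.1, ha⟩ ⟨b.1, hb⟩
    (memMono A hA (le_max_right m n) ha) (memMono A hA (le_max_right m n) hb)
  exact e1.trans e2.symm

theorem chInf_val {n : ℕ} (a b : ↥(⋃ n, (A n).carrier)) (ha : a.1 ∈ (A n).carrier)
    (hb : b.1 ∈ (A n).carrier) :
    (chInf A hA a b).1 = ((A n).inf ⟨a.1, ha⟩ ⟨b.1, hb⟩).1 := by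
  set m := max (chLvl A a) (chLvl A b) with hm
  have e1 := (extMono A hA (le_max_left m n)).inf_val
    ⟨a.1, memMono A hA (le_max_left _ _) (chLvl_mem A a)⟩
    ⟨b.1, memMono A hA (le_max_right _ _) (chLvl_mem A b)⟩
    (memMono A hA (le_max_left m n) (memMono A hA (le_max_left _ _) (chLvl_mem A a)))
    (memMono A hA (le_max_left m n) (memMono A hA (le_max_right _ _) (chLvl_mem A b)))
  have e2 := (extMono A hA (le_max_right m n)).inf_val ⟨a.1, ha⟩ ⟨b.1, hb⟩
    (memMono A hA (le_max_right m n) ha) (memMono A hA (le_max_right m n) hb)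
  exact e1.trans e2.symm

theorem chSup_eq {n : ℕ} (a b : ↥(⋃ n, (A n).carrier)) (ha : a.1 ∈ (A n).carrier)
    (hb : b.1 ∈ (A n).carrier) :
    chSup A hA a b = ⟨((A n).sup ⟨a.1, ha⟩ ⟨b.1, hb⟩).1,
      Set.mem_iUnion.2 ⟨n, Subtype.prop _⟩⟩ :=
  Subtype.ext (chSup_val A hA a b ha hb)

theorem chInf_eq {n : ℕ} (a b : ↥(⋃ n, (A n).carrier)) (ha : a.1 ∈ (A n).carrier)
    (hb : b.1 ∈ (A n).carrier) :
    chInf A hA a b = ⟨((A n).inf ⟨a.1, ha⟩ ⟨b.1, hb⟩).1,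
      Set.mem_iUnion.2 ⟨n, Subtype.prop _⟩⟩ :=
  Subtype.ext (chInf_val A hA a b ha hb)

theorem chBot_val {n : ℕ} : (A 0).bot.1 = (A n).bot.1 :=
  (extMono A hA (Nat.zero_le n)).bot_val

theorem chTop_val {n : ℕ} : (A 0).top.1 = (A n).top.1 :=
  (extMono A hA (Nat.zero_le n)).top_val

theorem chSup_mem {n : ℕ} (a b : ↥(⋃ n, (A n).carrier)) (ha : a.1 ∈ (A n).carrier)
    (hb : b.1 ∈ (A n).carrier) : (chSup A hA a b).1 ∈ (A n).carrier := by
  rw [chSup_val A hA a b ha hb]; exact Subtype.prop _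

theorem chInf_mem {n : ℕ} (a b : ↥(⋃ n, (A n).carrier)) (ha : a.1 ∈ (A n).carrier)
    (hb : b.1 ∈ (A n).carrier) : (chInf A hA a b).1 ∈ (A n).carrier := by
  rw [chInf_val A hA a b ha hb]; exact Subtype.prop _

theorem chLe_iff' {n : ℕ} (a b : ↥(⋃ n, (A n).carrier)) (x y : (A n).carrier)
    (hx : x.1 = a.1) (hy : y.1 = b.1) : chLe A a b ↔ (A n).le x y := by
  have ha : a.1 ∈ (A n).carrier := hx ▸ x.2
  have hb : b.1 ∈ (A n).carrier := hy ▸ y.2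
  have ex : x = ⟨a.1, ha⟩ := Subtype.ext hx
  have ey : y = ⟨b.1, hb⟩ := Subtype.ext hy
  rw [ex, ey]
  exact chLe_iff A hA a b ha hb

noncomputable def chPre : PreLoc U where
  carrier := ⋃ n, (A n).carrier
  le := chLe A
  bot := ⟨(A 0).bot.1, Set.mem_iUnion.2 ⟨0, (A 0).bot.2⟩⟩
  top := ⟨(A 0).top.1, Set.mem_iUnion.2 ⟨0, (A 0).top.2⟩⟩
  sup := chSup A hA
  inf := chInf A hA
  le_refl a := ⟨chLvl A a, chLvl_mem A a, chLvl_mem A a, (A _).le_refl _⟩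
  le_trans a b c hab hbc := by
    obtain ⟨m, ham, hbm, h1⟩ := hab
    obtain ⟨n, hbn, hcn, h2⟩ := hbc
    refine ⟨max m n, memMono A hA (le_max_left m n) ham,
      memMono A hA (le_max_right m n) hcn, ?_⟩
    refine (A (max m n)).le_trans _ ⟨b.1, memMono A hA (le_max_left m n) hbm⟩ _ ?_ ?_
    · exact ((extMono A hA (le_max_left m n)).le_iff _ _ _ _).mp h1
    · exact ((extMono A hA (le_max_right m n)).le_iff ⟨b.1, hbn⟩ ⟨c.1, hcn⟩
        (memMono A hA (le_max_right m n) hbn)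
        (memMono A hA (le_max_right m n) hcn)).mp h2
  bot_le a := by
    refine (chLe_iff' A hA _ a ((A (chLvl A a)).bot) ⟨a.1, chLvl_mem A a⟩
      (chBot_val A hA).symm rfl).mpr ?_
    exact (A _).bot_le _
  sup_le a b c h1 h2 := by
    set N := max (max (chLvl A a) (chLvl A b)) (chLvl A c) with hN
    have haN : a.1 ∈ (A N).carrier :=
      memMono A hA ((le_max_left _ _).trans (le_max_left _ _)) (chLvl_mem A a)
    have hbN : b.1 ∈ (A N).carrier :=
      memMono A hA ((le_max_right _ _).trans (le_max_left _ _)) (chLvl_mem A b)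
    have hcN : c.1 ∈ (A N).carrier := memMono A hA (le_max_right _ _) (chLvl_mem A c)
    have h1' := (chLe_iff A hA a c haN hcN).mp h1
    have h2' := (chLe_iff A hA b c hbN hcN).mp h2
    exact (chLe_iff' A hA _ c ((A N).sup ⟨a.1, haN⟩ ⟨b.1, hbN⟩) ⟨c.1, hcN⟩
      (chSup_val A hA a b haN hbN).symm rfl).mpr ((A N).sup_le _ _ _ h1' h2')
  le_sup_left a b := by
    set N := max (chLvl A a) (chLvl A b) with hN
    have haN : a.1 ∈ (A N).carrier := memMono A hA (le_max_left _ _) (chLvl_mem A a)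
    have hbN : b.1 ∈ (A N).carrier := memMono A hA (le_max_right _ _) (chLvl_mem A b)
    exact (chLe_iff' A hA a _ ⟨a.1, haN⟩ ((A N).sup ⟨a.1, haN⟩ ⟨b.1, hbN⟩) rfl
      (chSup_val A hA a b haN hbN).symm).mpr ((A N).le_sup_left _ _)
  le_sup_right a b := by
    set N := max (chLvl A a) (chLvl A b) with hN
    have haN : a.1 ∈ (A N).carrier := memMono A hA (le_max_left _ _) (chLvl_mem A a)
    have hbN : b.1 ∈ (A N).carrier := memMono A hA (le_max_right _ _) (chLvl_mem A b)
    exact (chLe_iff' A hA b _ ⟨b.1, hbN⟩ ((A N).sup ⟨a.1, haN⟩ ⟨b.1, hbN⟩) rfl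
      (chSup_val A hA a b haN hbN).symm).mpr ((A N).le_sup_right _ _)
  le_top a := by
    refine (chLe_iff' A hA a _ ⟨a.1, chLvl_mem A a⟩ ((A (chLvl A a)).top) rfl
      (chTop_val A hA).symm).mpr ?_
    exact (A _).le_top _
  le_inf a b c h1 h2 := by
    set N := max (max (chLvl A a) (chLvl A b)) (chLvl A c) with hN
    have haN : a.1 ∈ (A N).carrier :=
      memMono A hA ((le_max_left _ _).trans (le_max_left _ _)) (chLvl_mem A a)
    have hbN : b.1 ∈ (A N).carrier :=
      memMono A hA ((le_max_right _ _).trans (le_max_left _ _)) (chLvl_mem A b)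
    have hcN : c.1 ∈ (A N).carrier := memMono A hA (le_max_right _ _) (chLvl_mem A c)
    have h1' := (chLe_iff A hA a b haN hbN).mp h1
    have h2' := (chLe_iff A hA a c haN hcN).mp h2
    exact (chLe_iff' A hA a _ ⟨a.1, haN⟩ ((A N).inf ⟨b.1, hbN⟩ ⟨c.1, hcN⟩) rfl
      (chInf_val A hA b c hbN hcN).symm).mpr ((A N).le_inf _ _ _ h1' h2')
  inf_le_left a b := by
    set N := max (chLvl A a) (chLvl A b) with hN
    have haN : a.1 ∈ (A N).carrier := memMono A hA (le_max_left _ _) (chLvl_mem A a)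
    have hbN : b.1 ∈ (A N).carrier := memMono A hA (le_max_right _ _) (chLvl_mem A b)
    exact (chLe_iff' A hA _ a ((A N).inf ⟨a.1, haN⟩ ⟨b.1, hbN⟩) ⟨a.1, haN⟩
      (chInf_val A hA a b haN hbN).symm rfl).mpr ((A N).inf_le_left _ _)
  inf_le_right a b := by
    set N := max (chLvl A a) (chLvl A b) with hN
    have haN : a.1 ∈ (A N).carrier := memMono A hA (le_max_left _ _) (chLvl_mem A a)
    have hbN : b.1 ∈ (A N).carrier := memMono A hA (le_max_right _ _) (chLvl_mem A b)
    exact (chLe_iff' A hA _ b ((A N).inf ⟨a.1, haN⟩ ⟨b.1, hbN⟩) ⟨b.1, hbN⟩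
      (chInf_val A hA a b haN hbN).symm rfl).mpr ((A N).inf_le_right _ _)
  distrib a b c := by
    set N := max (max (chLvl A a) (chLvl A b)) (chLvl A c) with hN
    have haN : a.1 ∈ (A N).carrier :=
      memMono A hA ((le_max_left _ _).trans (le_max_left _ _)) (chLvl_mem A a)
    have hbN : b.1 ∈ (A N).carrier :=
      memMono A hA ((le_max_right _ _).trans (le_max_left _ _)) (chLvl_mem A b)
    have hcN : c.1 ∈ (A N).carrier := memMono A hA (le_max_right _ _) (chLvl_mem A c)
    have e1 : (chInf A hA a (chSup A hA b c)).1 =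
        ((A N).inf ⟨a.1, haN⟩ ((A N).sup ⟨b.1, hbN⟩ ⟨c.1, hcN⟩)).1 := by
      rw [chInf_val A hA a (chSup A hA b c) haN (chSup_mem A hA b c hbN hcN)]
      have : (⟨(chSup A hA b c).1, chSup_mem A hA b c hbN hcN⟩ : (A N).carrier) =
          (A N).sup ⟨b.1, hbN⟩ ⟨c.1, hcN⟩ := Subtype.ext (chSup_val A hA b c hbN hcN)
      rw [this]
    have e2 : (chSup A hA (chInf A hA a b) (chInf A hA a c)).1 =
        ((A N).sup ((A N).inf ⟨a.1, haN⟩ ⟨b.1, hbN⟩)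
          ((A N).inf ⟨a.1, haN⟩ ⟨c.1, hcN⟩)).1 := by
      rw [chSup_val A hA (chInf A hA a b) (chInf A hA a c)
        (chInf_mem A hA a b haN hbN) (chInf_mem A hA a c haN hcN)]
      have eb : (⟨(chInf A hA a b).1, chInf_mem A hA a b haN hbN⟩ : (A N).carrier) =
          (A N).inf ⟨a.1, haN⟩ ⟨b.1, hbN⟩ := Subtype.ext (chInf_val A hA a b haN hbN)
      have ec : (⟨(chInf A hA a c).1, chInf_mem A hA a c haN hcN⟩ : (A N).carrier) =
          (A N).inf ⟨a.1, haN⟩ ⟨c.1, hcN⟩ := Subtype.ext (chInf_val A hA a c haN hcN)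
      rw [eb, ec]
    exact (chLe_iff' A hA _ _ _ _ e1.symm e2.symm).mpr ((A N).distrib _ _ _)

theorem chPrime_of {n : ℕ} (x : U) (hx : x ∈ (A n).carrier)
    (hp : (A n).prime ⟨x, hx⟩) (hmem : x ∈ ⋃ m, (A m).carrier) :
    (chPre A hA).prime ⟨x, hmem⟩ := by
  intro b c h
  set N := max n (max (chLvl A b) (chLvl A c)) with hNdef
  have hxN : x ∈ (A N).carrier := memMono A hA (le_max_left _ _) hx
  have hbN : b.1 ∈ (A N).carrier :=
    memMono A hA ((le_max_left _ _).trans (le_max_right _ _)) (chLvl_mem A b)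
  have hcN : c.1 ∈ (A N).carrier :=
    memMono A hA ((le_max_right _ _).trans (le_max_right _ _)) (chLvl_mem A c)
  have hpN : (A N).prime ⟨x, hxN⟩ :=
    (extMono A hA (le_max_left _ _)).prime_imp ⟨x, hx⟩ hxN hp
  have h' : (A N).le ⟨x, hxN⟩ ((A N).sup ⟨b.1, hbN⟩ ⟨c.1, hcN⟩) :=
    (chLe_iff' A hA ⟨x, hmem⟩ (chSup A hA b c) ⟨x, hxN⟩
      ((A N).sup ⟨b.1, hbN⟩ ⟨c.1, hcN⟩) rfl (chSup_val A hA b c hbN hcN).symm).mp h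
  rcases hpN _ _ h' with h1 | h1
  · exact Or.inl ((chLe_iff' A hA ⟨x, hmem⟩ b ⟨x, hxN⟩ ⟨b.1, hbN⟩ rfl rfl).mpr h1)
  · exact Or.inr ((chLe_iff' A hA ⟨x, hmem⟩ c ⟨x, hxN⟩ ⟨c.1, hcN⟩ rfl rfl).mpr h1)

theorem extToChain (n : ℕ) : PreLoc.Ext (A n).toPreLoc (chPre A hA) := by
  refine ⟨fun x hx => Set.mem_iUnion.2 ⟨n, hx⟩, (chBot_val A hA).symm,
    (chTop_val A hA).symm, ?_, ?_, ?_, ?_⟩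
  · intro a b
    exact (chSup_val A hA ⟨a.1, Set.mem_iUnion.2 ⟨n, a.2⟩⟩
      ⟨b.1, Set.mem_iUnion.2 ⟨n, b.2⟩⟩ a.2 b.2).symm
  · intro a b
    exact (chInf_val A hA ⟨a.1, Set.mem_iUnion.2 ⟨n, a.2⟩⟩
      ⟨b.1, Set.mem_iUnion.2 ⟨n, b.2⟩⟩ a.2 b.2).symm
  · intro a b
    exact (chLe_iff A hA ⟨a.1, Set.mem_iUnion.2 ⟨n, a.2⟩⟩
      ⟨b.1, Set.mem_iUnion.2 ⟨n, b.2⟩⟩ a.2 b.2).symm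
  · intro a h
    exact chPrime_of A hA a.1 a.2 h (Set.mem_iUnion.2 ⟨n, a.2⟩)

noncomputable def chDom : DomPreLoc U where
  toPreLoc := chPre A hA
  d1 a := by
    obtain ⟨n, ha⟩ := Set.mem_iUnion.mp a.2
    obtain ⟨l, hl1, hl2⟩ := (A n).d1 ⟨a.1, ha⟩
    set E := extToChain A hA n with hE
    refine ⟨l.map fun x => ⟨x.1, E.subset x.2⟩, ?_, ?_, ?_⟩
    · intro b hb
      simp only [List.mem_map] at hb
      obtain ⟨x, hx, rfl⟩ := hb
      exact chPrime_of A hA x.1 x.2 (hl1 x hx) (E.subset x.2)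
    · exact (chLe_iff' A hA a ((chPre A hA).joinList (l.map fun x => ⟨x.1, E.subset x.2⟩))
        ⟨a.1, ha⟩ ((A n).joinList l) rfl (E.joinList_val l).symm).mpr hl2.1
    · exact (chLe_iff' A hA ((chPre A hA).joinList (l.map fun x => ⟨x.1, E.subset x.2⟩)) a
        ((A n).joinList l) ⟨a.1, ha⟩ (E.joinList_val l).symm rfl).mpr hl2.2
  d2 := by
    constructor
    · exact chPrime_of A hA (A 0).top.1 (A 0).top.2 (A 0).d2.1
        (Set.mem_iUnion.2 ⟨0, (A 0).top.2⟩)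
    · rintro ⟨h1, _⟩
      have h1' : (A 0).le (A 0).top (A 0).bot :=
        (chLe_iff' A hA (chPre A hA).top (chPre A hA).bot (A 0).top (A 0).bot
          rfl rfl).mp h1
      exact (A 0).d2.2 ⟨h1', (A 0).bot_le _⟩
  d3 a b pa pb := by
    obtain ⟨na, hna⟩ := Set.mem_iUnion.mp a.2
    obtain ⟨nb, hnb⟩ := Set.mem_iUnion.mp b.2
    set N := max na nb with hN
    have haN : a.1 ∈ (A N).carrier := memMono A hA (le_max_left _ _) hna
    have hbN : b.1 ∈ (A N).carrier := memMono A hA (le_max_right _ _) hnb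
    have paN : (A N).prime ⟨a.1, haN⟩ :=
      (extToChain A hA N).prime_rev ⟨a.1, haN⟩ a.2 pa
    have pbN : (A N).prime ⟨b.1, hbN⟩ :=
      (extToChain A hA N).prime_rev ⟨b.1, hbN⟩ b.2 pb
    have pN := (A N).d3 _ _ paN pbN
    show (chPre A hA).prime (chInf A hA a b)
    rw [chInf_eq A hA a b haN hbN]
    exact chPrime_of A hA ((A N).inf ⟨a.1, haN⟩ ⟨b.1, hbN⟩).1 (Subtype.prop _) pN _

theorem chDom_least (D : DomPreLoc U) (hD : ∀ n, (A n).Ext D) :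
    (chDom A hA).Ext D := by
  have hsub : (⋃ n, (A n).carrier) ⊆ D.carrier := by
    intro x hx
    obtain ⟨n, hn⟩ := Set.mem_iUnion.mp hx
    exact (hD n).subset hn
  refine ⟨hsub, ((hD 0).bot_val), ((hD 0).top_val), ?_, ?_, ?_, ?_⟩
  · intro a b
    set N := max (chLvl A a) (chLvl A b) with hN
    have haN : a.1 ∈ (A N).carrier := memMono A hA (le_max_left _ _) (chLvl_mem A a)
    have hbN : b.1 ∈ (A N).carrier := memMono A hA (le_max_right _ _) (chLvl_mem A b)
    exact (chSup_val A hA a b haN hbN).trans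
      ((hD N).sup_val ⟨a.1, haN⟩ ⟨b.1, hbN⟩ ((hD N).subset haN) ((hD N).subset hbN))
  · intro a b
    set N := max (chLvl A a) (chLvl A b) with hN
    have haN : a.1 ∈ (A N).carrier := memMono A hA (le_max_left _ _) (chLvl_mem A a)
    have hbN : b.1 ∈ (A N).carrier := memMono A hA (le_max_right _ _) (chLvl_mem A b)
    exact (chInf_val A hA a b haN hbN).trans
      ((hD N).inf_val ⟨a.1, haN⟩ ⟨b.1, hbN⟩ ((hD N).subset haN) ((hD N).subset hbN))
  · intro a b
    constructor
    · rintro ⟨n, ha, hb, h⟩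
      exact ((hD n).le_iff ⟨a.1, ha⟩ ⟨b.1, hb⟩ ((hD n).subset ha) ((hD n).subset hb)).mp h
    · intro h
      set N := max (chLvl A a) (chLvl A b) with hN
      have haN : a.1 ∈ (A N).carrier := memMono A hA (le_max_left _ _) (chLvl_mem A a)
      have hbN : b.1 ∈ (A N).carrier := memMono A hA (le_max_right _ _) (chLvl_mem A b)
      exact ⟨N, haN, hbN, ((hD N).le_iff ⟨a.1, haN⟩ ⟨b.1, hbN⟩
        ((hD N).subset haN) ((hD N).subset hbN)).mpr h⟩
  · intro a pa
    obtain ⟨n, ha⟩ := Set.mem_iUnion.mp a.2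
    have paN : (A n).prime ⟨a.1, ha⟩ :=
      (extToChain A hA n).prime_rev ⟨a.1, ha⟩ a.2 pa
    exact (hD n).prime_imp ⟨a.1, ha⟩ ((hD n).subset ha) paN

end Chain

/-- The class of domain prelocales under `⊴` is an ω-chain complete partial
order: `⊴` is reflexive, transitive and antisymmetric, and every ω-chain has a
least upper bound whose carrier and entailment relation are the componentwise
unions, and which is again a domain prelocale. -/
theorem domPreLoc_omega_chain_cpo (U : Type*) :
    (∀ A : DomPreLoc U, A.Ext A) ∧
    (∀ A B C : DomPreLoc U, A.Ext B → B.Ext C → A.Ext C) ∧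
    (∀ A B : DomPreLoc U, A.Ext B → B.Ext A → A = B) ∧
    (∀ A : ℕ → DomPreLoc U, (∀ n, (A n).Ext (A (n + 1))) →
      ∃ C : DomPreLoc U,
        (∀ n, (A n).Ext C) ∧
        (∀ D : DomPreLoc U, (∀ n, (A n).Ext D) → C.Ext D) ∧
        C.carrier = ⋃ n, (A n).carrier ∧
        (∀ a b : C.toPreLoc.carrier, C.le a b ↔
          ∃ n, ∃ (ha : a.1 ∈ (A n).carrier) (hb : b.1 ∈ (A n).carrier),
            (A n).le ⟨a.1, ha⟩ ⟨b.1, hb⟩)) := by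
  refine ⟨fun A => PreLoc.Ext.rfl' _, fun A B C h1 h2 => PreLoc.Ext.trans' h1 h2,
    fun A B h1 h2 => dompreloc_antisymm h1 h2, ?_⟩
  intro A hA
  exact ⟨chDom A hA, fun n => extToChain A hA n, fun D hD => chDom_least A hA D hD,
    rfl, fun a b => Iff.rfl⟩
end

section
/- Let f be a ⊴-monotonic operation on domain prelocales which is continuous on carriers, i.e. for every ⊴-chain (A_n), the carrier of f(⊔_n A_n) equals the union of the carriers of the f(A_n). Then f is continuous: f(⊔_n A_n) = ⊔_n f(A_n). The key auxiliary fact is: if A ⊴ B and |A| = |B| then A = B. -/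
theorem PreLoc.ext_eq {U : Type*} {A B : PreLoc U} (h : A.Ext B)
    (hc : A.carrier = B.carrier) : A = B := by
  obtain ⟨hsub, hbot, htop, hsup, hinf, hle, _⟩ := h
  cases A with
  | mk c le bot top sup inf r t bl sl lsl lsr lt li il ir d =>
  cases B with
  | mk c' le' bot' top' sup' inf' r' t' bl' sl' lsl' lsr' lt' li' il' ir' d' =>
  dsimp at hsub hbot htop hsup hinf hle hc
  subst hc
  have e1 : bot = bot' := Subtype.ext hbot
  have e2 : top = top' := Subtype.ext htop
  have e3 : sup = sup' := by
    funext a b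
    exact Subtype.ext (by simpa using hsup a b)
  have e4 : inf = inf' := by
    funext a b
    exact Subtype.ext (by simpa using hinf a b)
  have e5 : le = le' := by
    funext a b
    exact propext (by simpa using hle a b)
  subst e1 e2 e3 e4 e5
  rfl

theorem DomPreLoc.ext_eq {U : Type*} {A B : DomPreLoc U} (h : A.Ext B)
    (hc : A.carrier = B.carrier) : A = B := by
  cases A; cases B
  have := PreLoc.ext_eq h hc
  simp_all

/-- Continuity criterion: a `⊴`-monotone operation on domain prelocales which is
continuous on carriers is continuous, i.e. preserves least upper bounds of
ω-chains.  The key auxiliary fact: if `A ⊴ B` and `|A| = |B|` then `A = B`. -/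
theorem carrier_continuous_implies_continuous (U : Type*)
    (lub : (ℕ → DomPreLoc U) → DomPreLoc U)
    (hlub : ∀ A : ℕ → DomPreLoc U, (∀ n, (A n).Ext (A (n + 1))) →
      (∀ n, (A n).Ext (lub A)) ∧
      (∀ D : DomPreLoc U, (∀ n, (A n).Ext D) → (lub A).Ext D) ∧
      (lub A).carrier = ⋃ n, (A n).carrier)
    (f : DomPreLoc U → DomPreLoc U)
    (hmono : ∀ A B : DomPreLoc U, A.Ext B → (f A).Ext (f B))
    (hcc : ∀ A : ℕ → DomPreLoc U, (∀ n, (A n).Ext (A (n + 1))) →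
      (f (lub A)).carrier = ⋃ n, (f (A n)).carrier) :
    (∀ A B : DomPreLoc U, A.Ext B → A.carrier = B.carrier → A = B) ∧
    (∀ A : ℕ → DomPreLoc U, (∀ n, (A n).Ext (A (n + 1))) →
      f (lub A) = lub (fun n => f (A n))) := by
  refine ⟨fun A B h hc => DomPreLoc.ext_eq h hc, fun A hA => ?_⟩
  obtain ⟨hup, _, hcar⟩ := hlub A hA
  have hchain : ∀ n, (f (A n)).Ext (f (A (n + 1))) := fun n => hmono _ _ (hA n)
  obtain ⟨hup', hleast', hcar'⟩ := hlub (fun n => f (A n)) hchain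
  have hext : (lub (fun n => f (A n))).Ext (f (lub A)) :=
    hleast' _ (fun n => hmono _ _ (hup n))
  have hc : (lub (fun n => f (A n))).carrier = (f (lub A)).carrier := by
    rw [hcar', hcc A hA]
  exact (DomPreLoc.ext_eq hext hc).symm
end

section
/- For every finite synchronisation tree t and any process p in any transition system, t ≲^B p if and only if t ≲_ω p. More generally, if T is a synchronisation tree of height < λ, then T ≲^B p iff T ≲_λ p. -/
universe u v

/-- A labelled transition system with a divergence predicate. -/
structure LTS (Proc : Type v) (Act : Type u) where
  trans : Proc → Act → Proc → Prop
  div : Proc → Prop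

namespace LTS

variable {Proc : Type v} {Act : Type u}

def conv (T : LTS Proc Act) (p : Proc) : Prop := ¬ T.div p

def Prebisim (T : LTS Proc Act) (R : Proc → Proc → Prop) : Prop :=
  ∀ p q, R p q →
    (∀ a p', T.trans p a p' → ∃ q', T.trans q a q' ∧ R p' q') ∧
    (T.conv p → T.conv q ∧
      ∀ a q', T.trans q a q' → ∃ p', T.trans p a p' ∧ R p' q')

/-- The bisimulation preorder `≲^B`. -/
def Bisim (T : LTS Proc Act) (p q : Proc) : Prop :=
  ∃ R, T.Prebisim R ∧ R p q

/-- The prebisimulation operator. -/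
def Fop (T : LTS Proc Act) (R : Proc → Proc → Prop) : Proc → Proc → Prop :=
  fun p q =>
    (∀ a p', T.trans p a p' → ∃ q', T.trans q a q' ∧ R p' q') ∧
    (T.conv p → T.conv q ∧
      ∀ a q', T.trans q a q' → ∃ p', T.trans p a p' ∧ R p' q')

/-- The ordinal approximants `≲_λ`. -/
noncomputable def approx (T : LTS Proc Act) (α : Ordinal.{u}) : Proc → Proc → Prop :=
  Ordinal.limitRecOn α (fun _ _ => True) (fun _ R => T.Fop R)
    (fun o _ IH p q => ∀ β (h : β < o), IH β h p q)

end LTS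

/-- (Possibly infinitary) synchronisation trees `Σ_{i∈I} a_i t_i [+ Ω]` over `Act`;
the boolean records the optional divergence summand `Ω`. -/
inductive SyncTree (Act : Type u) : Type (u + 1)
  | node {ι : Type u} (lab : ι → Act) (child : ι → SyncTree Act) (d : Bool) : SyncTree Act

namespace SyncTree

variable {Act : Type u}

/-- The height of a synchronisation tree. -/
noncomputable def ht : SyncTree Act → Ordinal.{u}
  | .node _ child _ => (⨆ i, (child i).ht) + 1

/-- Finite synchronisation trees (finite sums everywhere). -/
def Fin : SyncTree Act → Prop
  | .node (ι := ι) _ child _ => _root_.Finite ι ∧ ∀ i, (child i).Fin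

end SyncTree

/-- The disjoint union of the synchronisation-tree transition system with a
given transition system `T`. -/
def comb {Proc : Type v} {Act : Type u} (T : LTS Proc Act) :
    LTS (SyncTree Act ⊕ Proc) Act where
  trans := fun x a y =>
    match x, y with
    | .inl (.node lab child _), .inl t => ∃ i, lab i = a ∧ child i = t
    | .inr p, .inr q => T.trans p a q
    | _, _ => False
  div := fun x =>
    match x with
    | .inl (.node _ _ d) => d = true
    | .inr p => T.div p

/-!
Every prebisimulation `R` satisfies `R ≤ Fop R`, so it lies below every approximant, and the
approximants decrease in the ordinal. Conversely, for trees the relation `t ≲_{ht t} p` is itself a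
prebisimulation: `ht t = (⨆ i, ht tᵢ) + 1`, so one unfolding of `≲_{ht t}` matches the moves of `t`
and `p` with pairs `(tᵢ, p')` related by `≲_{⨆ i, ht tᵢ}`, hence by `≲_{ht tᵢ}`. If `ht t < λ`
then `≲_λ` implies `≲_{ht t}`, hence `≲^B`. Finite trees have finite height because a finite
supremum of ordinals below `ω` stays below `ω`.
-/

namespace LTS

variable {Proc : Type v} {Act : Type u} (T : LTS Proc Act)

theorem prebisim_iff_le_fop {R : Proc → Proc → Prop} : T.Prebisim R ↔ R ≤ T.Fop R :=
  Iff.rfl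

theorem approx_zero : T.approx 0 = ⊤ := by
  rw [approx, Ordinal.limitRecOn_zero]
  rfl

theorem approx_add_one (α : Ordinal.{u}) : T.approx (α + 1) = T.Fop (T.approx α) := by
  rw [approx, approx, Ordinal.limitRecOn_add_one]

theorem approx_of_isSuccLimit {α : Ordinal.{u}} (hα : Order.IsSuccLimit α) (p q : Proc) :
    T.approx α p q ↔ ∀ β < α, T.approx β p q := by
  rw [approx, Ordinal.limitRecOn_limit _ _ _ _ hα]
  rfl

theorem fop_mono : Monotone T.Fop := by
  rintro R S hRS p q ⟨hfwd, hback⟩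
  refine ⟨fun a p' hp' => ?_, fun hc => ?_⟩
  · obtain ⟨q', hq', hR⟩ := hfwd a p' hp'
    exact ⟨q', hq', hRS _ _ hR⟩
  · obtain ⟨hcq, hback⟩ := hback hc
    refine ⟨hcq, fun a q' hq' => ?_⟩
    obtain ⟨p', hp', hR⟩ := hback a q' hq'
    exact ⟨p', hp', hRS _ _ hR⟩

theorem approx_add_one_le (α : Ordinal.{u}) : T.approx (α + 1) ≤ T.approx α := by
  induction α using Ordinal.limitRecOn with
  | zero => simp [approx_zero]
  | add_one α ih => simpa only [approx_add_one] using T.fop_mono ih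
  | limit α hα ih =>
    intro p q hpq
    refine (T.approx_of_isSuccLimit hα p q).2 fun β hβ => ih β hβ p q ?_
    rw [approx_add_one] at hpq ⊢
    exact T.fop_mono (fun p q h => (T.approx_of_isSuccLimit hα p q).1 h β hβ) p q hpq

theorem approx_antitone : Antitone T.approx := by
  intro α β hαβ
  induction β using Ordinal.limitRecOn with
  | zero => rw [nonpos_iff_eq_zero.1 hαβ]
  | add_one β ih =>
    rcases hαβ.eq_or_lt with rfl | hlt
    · exact le_rfl
    · exact (T.approx_add_one_le β).trans (ih (Order.lt_add_one_iff.1 hlt))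
  | limit β hβ ih =>
    rcases hαβ.eq_or_lt with rfl | hlt
    · exact le_rfl
    · exact fun p q h => (T.approx_of_isSuccLimit hβ p q).1 h α hlt

theorem Prebisim.le_approx {R : Proc → Proc → Prop} (hR : T.Prebisim R) (α : Ordinal.{u}) :
    R ≤ T.approx α := by
  induction α using Ordinal.limitRecOn with
  | zero => simp [approx_zero]
  | add_one α ih =>
    rw [approx_add_one]
    exact (T.prebisim_iff_le_fop.1 hR).trans (T.fop_mono ih)
  | limit α hα ih =>
    exact fun p q hpq => (T.approx_of_isSuccLimit hα p q).2 fun β hβ => ih β hβ p q hpq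

theorem bisim_le_approx (α : Ordinal.{u}) : T.Bisim ≤ T.approx α := by
  rintro p q ⟨R, hR, hpq⟩
  exact hR.le_approx T α p q hpq

end LTS

theorem SyncTree.ht_lt_omega0_of_fin {Act : Type u} (t : SyncTree Act) (hfin : t.Fin) :
    t.ht < Ordinal.omega0 := by
  induction t with
  | node lab child d ih =>
    obtain ⟨hι, hchild⟩ := hfin
    have hsup : ⨆ i, (child i).ht < Ordinal.omega0 :=
      Ordinal.iSup_lt_of_lt_cof (by rw [Ordinal.cof_omega0]; exact Cardinal.lt_aleph0_of_finite _)
        fun i => ih i (hchild i)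
    rw [SyncTree.ht]
    exact Ordinal.isSuccLimit_omega0.add_one_lt hsup

section Comb

variable {Proc : Type v} {Act : Type u} (T : LTS Proc Act)

theorem comb_trans_node_iff {ι : Type u} {lab : ι → Act} {child : ι → SyncTree Act} {d : Bool}
    {a : Act} {x : SyncTree Act ⊕ Proc} :
    (comb T).trans (.inl (.node lab child d)) a x ↔ ∃ i, lab i = a ∧ x = .inl (child i) := by
  rcases x with t | q <;> simp [comb, eq_comm]

theorem comb_trans_inr_iff {p : Proc} {a : Act} {x : SyncTree Act ⊕ Proc} :
    (comb T).trans (.inr p) a x ↔ ∃ q, T.trans p a q ∧ x = .inr q := by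
  rcases x with t | q <;> simp [comb]

def approxAtHeight : SyncTree Act ⊕ Proc → SyncTree Act ⊕ Proc → Prop
  | .inl t, .inr p => (comb T).approx t.ht (.inl t) (.inr p)
  | _, _ => False

theorem prebisim_approxAtHeight : (comb T).Prebisim (approxAtHeight T) := by
  rintro (⟨lab, child, d⟩ | _) (_ | p) h <;> try exact h.elim
  have hchild : ∀ i, (comb T).approx (⨆ j, (child j).ht) ≤ (comb T).approx (child i).ht :=
    fun i => (comb T).approx_antitone (Ordinal.le_iSup _ i)
  obtain ⟨hfwd, hback⟩ : (comb T).Fop ((comb T).approx (⨆ j, (child j).ht))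
      (.inl (.node lab child d)) (.inr p) := by
    rw [← LTS.approx_add_one]
    exact h
  refine ⟨fun a x hx => ?_, fun hc => ?_⟩
  · obtain ⟨i, -, rfl⟩ := (comb_trans_node_iff T).1 hx
    obtain ⟨y, hy, hxy⟩ := hfwd _ _ hx
    obtain ⟨q, -, rfl⟩ := (comb_trans_inr_iff T).1 hy
    exact ⟨_, hy, hchild i _ _ hxy⟩
  · obtain ⟨hcp, hback⟩ := hback hc
    refine ⟨hcp, fun a y hy => ?_⟩
    obtain ⟨q, -, rfl⟩ := (comb_trans_inr_iff T).1 hy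
    obtain ⟨x, hx, hxy⟩ := hback _ _ hy
    obtain ⟨i, -, rfl⟩ := (comb_trans_node_iff T).1 hx
    exact ⟨_, hx, hchild i _ _ hxy⟩

theorem comb_bisim_of_approx_ht {t : SyncTree Act} {p : Proc}
    (h : (comb T).approx t.ht (.inl t) (.inr p)) : (comb T).Bisim (.inl t) (.inr p) :=
  ⟨approxAtHeight T, prebisim_approxAtHeight T, h⟩

theorem comb_bisim_iff_approx_of_ht_lt {t : SyncTree Act} {p : Proc} {lam : Ordinal.{u}}
    (hlam : t.ht < lam) :
    (comb T).Bisim (.inl t) (.inr p) ↔ (comb T).approx lam (.inl t) (.inr p) :=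
  ⟨fun h => (comb T).bisim_le_approx lam _ _ h,
    fun h => comb_bisim_of_approx_ht T ((comb T).approx_antitone hlam.le _ _ h)⟩

end Comb

/-- If `T` is a synchronisation tree of height `< λ`, then `T ≲^B p` iff
`T ≲_λ p`; in particular, for every finite synchronisation tree `t` and any
process `p` of any transition system, `t ≲^B p` iff `t ≲_ω p`. -/
theorem tree_bisim_iff_approx {Proc : Type v} {Act : Type u} (T : LTS Proc Act) :
    (∀ (t : SyncTree Act) (p : Proc) (lam : Ordinal.{u}), t.ht < lam →
      ((comb T).Bisim (.inl t) (.inr p) ↔ (comb T).approx lam (.inl t) (.inr p))) ∧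
    (∀ (t : SyncTree Act) (p : Proc), t.Fin →
      ((comb T).Bisim (.inl t) (.inr p) ↔
        (comb T).approx Ordinal.omega0 (.inl t) (.inr p))) :=
  ⟨fun _ _ _ hlam => comb_bisim_iff_approx_of_ht_lt T hlam,
    fun t _ hfin => comb_bisim_iff_approx_of_ht_lt T (t.ht_lt_omega0_of_fin hfin)⟩
end

section
/- In the lazy λ-calculus, applicative bisimulation ≲^B is a precongruence: it is reflexive, transitive, closed under substitution (M ≲ N implies M[P/x] ≲ N[P/x] and P[M/x] ≲ P[N/x]), closed under λ-abstraction, and compatible with application (M_i ≲ N_i for i=1,2 implies M₁M₂ ≲ N₁N₂). -/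
/-- λ-terms in de Bruijn representation. -/
inductive Tm : Type
  | var (n : ℕ) : Tm
  | lam (M : Tm) : Tm
  | app (M N : Tm) : Tm

namespace Tm

/-- Renaming of free variables. -/
def rename (f : ℕ → ℕ) : Tm → Tm
  | .var n => .var (f n)
  | .lam M => .lam (rename (fun n => match n with | 0 => 0 | n + 1 => f n + 1) M)
  | .app M N => .app (rename f M) (rename f N)

/-- Simultaneous substitution. -/
def subst (σ : ℕ → Tm) : Tm → Tm
  | .var n => σ n
  | .lam M => .lam (subst (fun n => match n with
      | 0 => .var 0
      | n + 1 => rename (· + 1) (σ n)) M)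
  | .app M N => .app (subst σ M) (subst σ N)

/-- `M[P/x]`: substitution of `P` for the outermost free variable. -/
def subst0 (M P : Tm) : Tm :=
  subst (fun n => match n with | 0 => P | n + 1 => .var n) M

/-- `M` has all free variables below `k`. -/
def ClosedUnder : ℕ → Tm → Prop
  | k, .var n => n < k
  | k, .lam M => ClosedUnder (k + 1) M
  | k, .app M N => ClosedUnder k M ∧ ClosedUnder k N

/-- Closed terms. -/
def Closed (M : Tm) : Prop := ClosedUnder 0 M

/-- Lazy evaluation to principal weak head normal form: `M ⇓ N`. -/
inductive Big : Tm → Tm → Prop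
  | lam (M : Tm) : Big (.lam M) (.lam M)
  | app {M N P Q : Tm} : Big M (.lam P) → Big (subst0 P N) Q → Big (.app M N) Q

/-- The approximants `≲_k` of applicative bisimulation (on closed terms). -/
def lek : ℕ → Tm → Tm → Prop
  | 0, _, _ => True
  | k + 1, M, N => ∀ M₁, Big M (.lam M₁) →
      ∃ N₁, Big N (.lam N₁) ∧
        ∀ P, Closed P → lek k (subst0 M₁ P) (subst0 N₁ P)

/-- Applicative bisimulation `≲^B` on closed terms. -/
def bisimC (M N : Tm) : Prop := ∀ k, lek k M N

/-- Applicative bisimulation `≲^B` on arbitrary terms, via closing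
substitutions. -/
def leB (M N : Tm) : Prop :=
  ∀ σ : ℕ → Tm, (∀ n, Closed (σ n)) → bisimC (subst σ M) (subst σ N)

end Tm

namespace Tm

def liftf (f : ℕ → ℕ) : ℕ → ℕ := fun n => match n with | 0 => 0 | n + 1 => f n + 1
def lifts (σ : ℕ → Tm) : ℕ → Tm := fun n => match n with
  | 0 => .var 0
  | n + 1 => rename (· + 1) (σ n)
def cons (P : Tm) (σ : ℕ → Tm) : ℕ → Tm := fun n => match n with | 0 => P | n + 1 => σ n

lemma rename_lam (f : ℕ → ℕ) (M : Tm) : rename f (.lam M) = .lam (rename (liftf f) M) := rfl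
lemma subst_lam (σ : ℕ → Tm) (M : Tm) : subst σ (.lam M) = .lam (subst (lifts σ) M) := rfl
lemma subst0_eq (M P : Tm) : subst0 M P = subst (cons P .var) M := rfl


lemma rename_ext {f g : ℕ → ℕ} (h : ∀ n, f n = g n) (M : Tm) :
    rename f M = rename g M := by
  have : f = g := funext h
  rw [this]

lemma subst_ext {σ τ : ℕ → Tm} (h : ∀ n, σ n = τ n) (M : Tm) :
    subst σ M = subst τ M := by
  have : σ = τ := funext h
  rw [this]

lemma rename_rename (f g : ℕ → ℕ) (M : Tm) :
    rename f (rename g M) = rename (fun n => f (g n)) M := by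
  induction M generalizing f g with
  | var n => rfl
  | lam M ih =>
      show Tm.lam _ = Tm.lam _
      rw [ih]
      exact congrArg Tm.lam (rename_ext (fun n => by cases n <;> rfl) M)
  | app M N ihM ihN => show Tm.app _ _ = Tm.app _ _; rw [ihM, ihN]

lemma subst_rename (σ : ℕ → Tm) (f : ℕ → ℕ) (M : Tm) :
    subst σ (rename f M) = subst (fun n => σ (f n)) M := by
  induction M generalizing σ f with
  | var n => rfl
  | lam M ih =>
      show Tm.lam _ = Tm.lam _
      rw [ih]
      exact congrArg Tm.lam (subst_ext (fun n => by cases n <;> rfl) M)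
  | app M N ihM ihN => show Tm.app _ _ = Tm.app _ _; rw [ihM, ihN]

lemma rename_subst (f : ℕ → ℕ) (σ : ℕ → Tm) (M : Tm) :
    rename f (subst σ M) = subst (fun n => rename f (σ n)) M := by
  induction M generalizing σ f with
  | var n => rfl
  | lam M ih =>
      show Tm.lam _ = Tm.lam _
      rw [ih]
      refine congrArg Tm.lam (subst_ext (fun n => ?_) M)
      cases n with
      | zero => rfl
      | succ n =>
          show rename (liftf f) (rename (· + 1) (σ n)) = rename (· + 1) (rename f (σ n))
          rw [rename_rename, rename_rename]
          exact rename_ext (fun i => rfl) _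
  | app M N ihM ihN => show Tm.app _ _ = Tm.app _ _; rw [ihM, ihN]

lemma subst_subst (σ τ : ℕ → Tm) (M : Tm) :
    subst σ (subst τ M) = subst (fun n => subst σ (τ n)) M := by
  induction M generalizing σ τ with
  | var n => rfl
  | lam M ih =>
      show Tm.lam _ = Tm.lam _
      rw [ih]
      refine congrArg Tm.lam (subst_ext (fun n => ?_) M)
      cases n with
      | zero => rfl
      | succ n =>
          show subst (lifts σ) (rename (· + 1) (τ n)) = rename (· + 1) (subst σ (τ n))
          rw [subst_rename, rename_subst]
          exact subst_ext (fun i => rfl) _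
  | app M N ihM ihN => show Tm.app _ _ = Tm.app _ _; rw [ihM, ihN]

lemma subst_var (M : Tm) : subst Tm.var M = M := by
  induction M with
  | var n => rfl
  | lam M ih =>
      show Tm.lam (subst (lifts Tm.var) M) = Tm.lam M
      have h : lifts Tm.var = Tm.var := by funext n; cases n <;> rfl
      rw [h, ih]
  | app M N ihM ihN => show Tm.app _ _ = Tm.app _ _; rw [ihM, ihN]

lemma subst_agree {m : ℕ} {σ τ : ℕ → Tm} {M : Tm} (hM : ClosedUnder m M)
    (h : ∀ n < m, σ n = τ n) : subst σ M = subst τ M := by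
  induction M generalizing m σ τ with
  | var n => exact h n hM
  | lam M ih =>
      show Tm.lam _ = Tm.lam _
      congr 1
      refine ih (m := m + 1) hM ?_
      intro n hn
      cases n with
      | zero => rfl
      | succ n => show rename _ (σ n) = rename _ (τ n); rw [h n (by omega)]
  | app M N ihM ihN =>
      show Tm.app _ _ = Tm.app _ _
      rw [ihM hM.1 h, ihN hM.2 h]

lemma subst_closed_id {M : Tm} (hM : Closed M) (σ : ℕ → Tm) : subst σ M = M := by
  rw [subst_agree (m := 0) hM (fun n hn => absurd hn (by omega)), subst_var]

lemma closedUnder_mono {m m' : ℕ} (h : m ≤ m') {M : Tm} (hM : ClosedUnder m M) :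
    ClosedUnder m' M := by
  induction M generalizing m m' with
  | var n => exact lt_of_lt_of_le hM h
  | lam M ih => exact ih (by omega) hM
  | app M N ihM ihN => exact ⟨ihM h hM.1, ihN h hM.2⟩

lemma exists_closedUnder (M : Tm) : ∃ m, ClosedUnder m M := by
  induction M with
  | var n => exact ⟨n + 1, by simp [ClosedUnder]⟩
  | lam M ih =>
      obtain ⟨m, hm⟩ := ih
      exact ⟨m, show ClosedUnder (m + 1) M from closedUnder_mono (by omega) hm⟩
  | app M N ihM ihN =>
      obtain ⟨m, hm⟩ := ihM; obtain ⟨m', hm'⟩ := ihN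
      exact ⟨max m m', closedUnder_mono (le_max_left _ _) hm,
        closedUnder_mono (le_max_right _ _) hm'⟩

lemma closedUnder_rename {m m' : ℕ} {f : ℕ → ℕ} {M : Tm} (hM : ClosedUnder m M)
    (hf : ∀ n < m, f n < m') : ClosedUnder m' (rename f M) := by
  induction M generalizing m m' f with
  | var n => exact hf n hM
  | lam M ih =>
      refine ih (m := m + 1) hM ?_
      intro n hn
      cases n with
      | zero => show (0:ℕ) < m' + 1; omega
      | succ n => show f n + 1 < m' + 1; have := hf n (by omega); omega
  | app M N ihM ihN => exact ⟨ihM hM.1 hf, ihN hM.2 hf⟩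

lemma closedUnder_subst {m m' : ℕ} {σ : ℕ → Tm} {M : Tm} (hM : ClosedUnder m M)
    (hσ : ∀ n < m, ClosedUnder m' (σ n)) : ClosedUnder m' (subst σ M) := by
  induction M generalizing m m' σ with
  | var n => exact hσ n hM
  | lam M ih =>
      refine ih (m := m + 1) hM ?_
      intro n hn
      cases n with
      | zero => show (0:ℕ) < m' + 1; omega
      | succ n =>
          exact closedUnder_rename (hσ n (by omega)) (fun i hi => by omega)
  | app M N ihM ihN => exact ⟨ihM hM.1 hσ, ihN hM.2 hσ⟩

lemma closed_subst {σ : ℕ → Tm} (hσ : ∀ n, Closed (σ n)) {M : Tm} :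
    Closed (subst σ M) := by
  obtain ⟨m, hm⟩ := exists_closedUnder M
  exact closedUnder_subst hm (fun n _ => closedUnder_mono (by omega) (hσ n))

lemma subst0_subst (σ : ℕ → Tm) (M P : Tm) :
    subst σ (subst0 M P) = subst (cons (subst σ P) σ) M := by
  rw [subst0_eq, subst_subst]
  exact subst_ext (fun n => by cases n <;> rfl) M

lemma subst0_lifts (σ : ℕ → Tm) (M P : Tm) :
    subst0 (subst (lifts σ) M) P = subst (cons P σ) M := by
  rw [subst0_eq, subst_subst]
  refine subst_ext (fun n => ?_) M
  cases n with
  | zero => rfl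
  | succ n =>
      show subst (cons P Tm.var) (rename (· + 1) (σ n)) = σ n
      rw [subst_rename]
      exact subst_var (σ n)

lemma big_det {M V W : Tm} (h : Big M V) (h' : Big M W) : V = W := by
  induction h generalizing W with
  | lam M => cases h'; rfl
  | app h1 h2 ih1 ih2 =>
      cases h' with
      | app h1' h2' =>
          cases ih1 h1'
          exact ih2 h2'

lemma big_closed {M V : Tm} (h : Big M V) (hM : Closed M) : Closed V := by
  induction h with
  | lam M => exact hM
  | app h1 h2 ih1 ih2 =>
      refine ih2 ?_
      have hP : Closed (Tm.lam _) := ih1 hM.1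
      rw [subst0_eq]
      refine closedUnder_subst (m := 1) hP ?_
      intro n hn
      cases n with
      | zero => exact hM.2
      | succ n => omega

end Tm

namespace Tm

lemma lek_succ {k : ℕ} {M N : Tm} :
    lek (k + 1) M N ↔ ∀ M₁, Big M (.lam M₁) →
      ∃ N₁, Big N (.lam N₁) ∧
        ∀ P, Closed P → lek k (subst0 M₁ P) (subst0 N₁ P) := Iff.rfl

lemma lek_refl : ∀ (k : ℕ) (M : Tm), lek k M M := by
  intro k
  induction k with
  | zero => intro M; trivial
  | succ k ih =>
      intro M M₁ h
      exact ⟨M₁, h, fun P _ => ih _⟩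

lemma lek_trans : ∀ (k : ℕ) {M N P : Tm}, lek k M N → lek k N P → lek k M P := by
  intro k
  induction k with
  | zero => intro M N P _ _; trivial
  | succ k ih =>
      intro M N P h h' M₁ hM
      obtain ⟨N₁, hN, hb⟩ := h M₁ hM
      obtain ⟨P₁, hP, hb'⟩ := h' N₁ hN
      exact ⟨P₁, hP, fun Q hQ => ih (hb Q hQ) (hb' Q hQ)⟩

lemma bisimC_refl (M : Tm) : bisimC M M := fun k => lek_refl k M

lemma bisimC_trans {M N P : Tm} (h : bisimC M N) (h' : bisimC N P) : bisimC M P :=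
  fun k => lek_trans k (h k) (h' k)

lemma bisimC_big {M N A : Tm} (h : bisimC M N) (hM : Big M (.lam A)) :
    ∃ A', Big N (.lam A') ∧ ∀ P, Closed P → bisimC (subst0 A P) (subst0 A' P) := by
  obtain ⟨A', hN, -⟩ := h 1 A hM
  refine ⟨A', hN, fun P hP k => ?_⟩
  obtain ⟨A'', hN', hb⟩ := h (k + 1) A hM
  obtain rfl : A' = A'' := by
    have := big_det hN hN'
    injection this
  exact hb P hP

lemma leB_refl (M : Tm) : leB M M := fun σ _ => bisimC_refl _

lemma leB_trans {M N P : Tm} (h : leB M N) (h' : leB N P) : leB M P :=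
  fun σ hσ => bisimC_trans (h σ hσ) (h' σ hσ)

lemma leB_subst {M N : Tm} (h : leB M N) (τ : ℕ → Tm) :
    leB (subst τ M) (subst τ N) := by
  intro σ hσ
  rw [subst_subst, subst_subst]
  exact h _ (fun n => closed_subst hσ)

lemma leB_rename {M N : Tm} (h : leB M N) (f : ℕ → ℕ) :
    leB (rename f M) (rename f N) := by
  intro σ hσ
  rw [subst_rename, subst_rename]
  exact h _ (fun n => hσ (f n))

lemma bisimC_of_leB {M N : Tm} (hM : Closed M) (hN : Closed N) (h : leB M N) :
    bisimC M N := by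
  have hc : ∀ n : ℕ, Closed ((fun _ => Tm.lam (.var 0)) n) := by
    intro n
    show ClosedUnder 1 (Tm.var 0)
    show (0:ℕ) < 1
    omega
  have := h _ hc
  rwa [subst_closed_id hM, subst_closed_id hN] at this

lemma leB_of_bisimC {M N : Tm} (hM : Closed M) (hN : Closed N) (h : bisimC M N) :
    leB M N := by
  intro σ hσ
  rwa [subst_closed_id hM, subst_closed_id hN]

end Tm

namespace Tm

/-- Howe's precongruence candidate, scoped under `m` free variables. -/
inductive Howe : ℕ → Tm → Tm → Prop
  | var {m x N} : x < m → ClosedUnder m N → leB (.var x) N → Howe m (.var x) N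
  | lam {m M M' N} : Howe (m + 1) M M' → ClosedUnder m N → leB (.lam M') N →
      Howe m (.lam M) N
  | app {m M₁ M₂ N₁ N₂ N} : Howe m M₁ N₁ → Howe m M₂ N₂ → ClosedUnder m N →
      leB (.app N₁ N₂) N → Howe m (.app M₁ M₂) N

lemma howe_scope {m : ℕ} {M N : Tm} (h : Howe m M N) :
    ClosedUnder m M ∧ ClosedUnder m N := by
  induction h with
  | var hx hN _ => exact ⟨hx, hN⟩
  | lam h hN _ ih => exact ⟨ih.1, hN⟩
  | app h1 h2 hN _ ih1 ih2 => exact ⟨⟨ih1.1, ih2.1⟩, hN⟩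

lemma howe_refl {m : ℕ} {M : Tm} (hM : ClosedUnder m M) : Howe m M M := by
  induction M generalizing m with
  | var n => exact Howe.var hM hM (leB_refl _)
  | lam M ih => exact Howe.lam (ih hM) hM (leB_refl _)
  | app M N ihM ihN => exact Howe.app (ihM hM.1) (ihN hM.2) hM (leB_refl _)

lemma howe_right {m : ℕ} {M N P : Tm} (h : Howe m M N) (hP : ClosedUnder m P)
    (hNP : leB N P) : Howe m M P := by
  cases h with
  | var hx _ hl => exact Howe.var hx hP (leB_trans hl hNP)
  | lam h _ hl => exact Howe.lam h hP (leB_trans hl hNP)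
  | app h1 h2 _ hl => exact Howe.app h1 h2 hP (leB_trans hl hNP)

lemma howe_rename {m m' : ℕ} {M N : Tm} (h : Howe m M N) {f : ℕ → ℕ}
    (hf : ∀ n < m, f n < m') : Howe m' (rename f M) (rename f N) := by
  induction h generalizing m' f with
  | var hx hN hl =>
      exact Howe.var (hf _ hx) (closedUnder_rename hN hf) (leB_rename hl f)
  | @lam m M M' N h hN hl ih =>
      rw [rename_lam]
      refine Howe.lam (ih (m' := m' + 1) ?_) (closedUnder_rename hN hf) ?_
      · intro n hn
        cases n with
        | zero => show (0:ℕ) < m' + 1; omega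
        | succ n => show f n + 1 < m' + 1; have := hf n (by omega); omega
      · have := leB_rename hl f
        rwa [rename_lam] at this
  | app h1 h2 hN hl ih1 ih2 =>
      refine Howe.app (ih1 hf) (ih2 hf) (closedUnder_rename hN hf) ?_
      have := leB_rename hl f
      exact this

lemma howe_subst {m m' : ℕ} {M M' : Tm} (h : Howe m M M') {σ σ' : ℕ → Tm}
    (hσ : ∀ n < m, Howe m' (σ n) (σ' n)) :
    Howe m' (subst σ M) (subst σ' M') := by
  induction h generalizing m' σ σ' with
  | @var m x N hx hN hl =>
      have hx' := hσ x hx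
      refine howe_right hx' ?_ ?_
      · refine closedUnder_subst hN (fun n hn => (howe_scope (hσ n hn)).2)
      · have := leB_subst hl σ'
        exact this
  | @lam m M M' N h hN hl ih =>
      rw [subst_lam]
      refine Howe.lam (M' := subst (lifts σ') M')
        (ih (m' := m' + 1) (σ := lifts σ) (σ' := lifts σ') ?_) ?_ ?_
      · intro n hn
        cases n with
        | zero =>
            refine howe_refl ?_
            show (0:ℕ) < m' + 1
            omega
        | succ n =>
            show Howe (m' + 1) (rename (· + 1) (σ n)) (rename (· + 1) (σ' n))
            exact howe_rename (hσ n (by omega)) (fun i hi => by omega)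
      · exact closedUnder_subst hN (fun n hn => (howe_scope (hσ n hn)).2)
      · have := leB_subst hl σ'
        rwa [subst_lam] at this
  | @app m M₁ M₂ N₁ N₂ N h1 h2 hN hl ih1 ih2 =>
      refine Howe.app (ih1 hσ) (ih2 hσ) ?_ ?_
      · exact closedUnder_subst hN (fun n hn => (howe_scope (hσ n hn)).2)
      · have := leB_subst hl σ'
        exact this


/-- Key lemma of Howe's method. -/
lemma howe_key {M V : Tm} (h : Big M V) :
    ∀ N A, Howe 0 M N → V = .lam A →
      ∃ A' B', Big N (.lam A') ∧ Howe 1 A B' ∧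
        ∀ P, Closed P → bisimC (subst0 B' P) (subst0 A' P) := by
  induction h with
  | lam M =>
      intro N A h hA
      injection hA with hA
      subst hA
      cases h with
      | @lam _ _ M' _ h hN hl =>
          have hM' : Closed (Tm.lam M') := (howe_scope h).2
          have hb : bisimC (Tm.lam M') N := bisimC_of_leB hM' hN hl
          obtain ⟨A', hNb, hbody⟩ := bisimC_big hb (Big.lam M')
          exact ⟨A', M', hNb, h, hbody⟩
  | @app M₁ M₂ A₀ Q h1 h2 ih1 ih2 =>
      intro N A hH hA
      subst hA
      cases hH with
      | @app _ _ _ N₁ N₂ _ hH1 hH2 hN hl =>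
          obtain ⟨A₁, B₁, hN1, hAB1, hb1⟩ := ih1 N₁ A₀ hH1 rfl
          -- Howe 0 (A₀[M₂]) (B₁[N₂])
          have hsub : Howe 0 (subst0 A₀ M₂) (subst0 B₁ N₂) := by
            rw [subst0_eq, subst0_eq]
            refine howe_subst hAB1 ?_
            intro n hn
            interval_cases n
            exact hH2
          obtain ⟨A₂, B₂, hB1N2, hAB2, hb2⟩ := ih2 _ A hsub rfl
          -- relate A₁[N₂] to B₁[N₂]
          have hN₂c : Closed N₂ := (howe_scope hH2).2
          have hb1' : bisimC (subst0 B₁ N₂) (subst0 A₁ N₂) := hb1 N₂ hN₂c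
          obtain ⟨A₃, hA1N2, hb3⟩ := bisimC_big hb1' hB1N2
          have happ : Big (.app N₁ N₂) (.lam A₃) := Big.app hN1 hA1N2
          -- use leB (app N₁ N₂) N
          have hN12c : Closed (Tm.app N₁ N₂) := ⟨(howe_scope hH1).2, hN₂c⟩
          have hbN : bisimC (Tm.app N₁ N₂) N := bisimC_of_leB hN12c hN hl
          obtain ⟨A₄, hNb, hb4⟩ := bisimC_big hbN happ
          refine ⟨A₄, B₂, hNb, hAB2, fun P hP => ?_⟩
          exact bisimC_trans (hb2 P hP) (bisimC_trans (hb3 P hP) (hb4 P hP))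

lemma howe_lek : ∀ (k : ℕ) {M N : Tm}, Howe 0 M N → lek k M N := by
  intro k
  induction k with
  | zero => intro M N _; trivial
  | succ k ih =>
      intro M N h M₁ hM
      obtain ⟨A', B', hN, hAB, hb⟩ := howe_key hM N M₁ h rfl
      refine ⟨A', hN, fun P hP => ?_⟩
      have hH : Howe 0 (subst0 M₁ P) (subst0 B' P) := by
        rw [subst0_eq, subst0_eq]
        refine howe_subst hAB ?_
        intro n hn
        interval_cases n
        exact howe_refl hP
      exact lek_trans k (ih hH) (hb P hP k)

lemma howe_bisimC {M N : Tm} (h : Howe 0 M N) : bisimC M N := fun k => howe_lek k h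

end Tm


namespace Tm

lemma cons_closing {P : Tm} {σ : ℕ → Tm} (hP : Closed P) (hσ : ∀ n, Closed (σ n)) :
    ∀ n, Closed (cons P σ n) := by
  intro n
  cases n with
  | zero => exact hP
  | succ n => exact hσ n

lemma howe_of_bisimC_closed {M N : Tm} (hM : Closed M) (hN : Closed N)
    (h : bisimC M N) : Howe 0 M N :=
  howe_right (howe_refl hM) hN (leB_of_bisimC hM hN h)

end Tm



open Tm

/-- Applicative bisimulation in the lazy λ-calculus is a precongruence:
reflexive, transitive, closed under substitution (in both positions),
closed under λ-abstraction, and compatible with application. -/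
theorem applicative_bisim_precongruence :
    Reflexive leB ∧
    Transitive leB ∧
    (∀ M N P : Tm, leB M N → leB (subst0 M P) (subst0 N P)) ∧
    (∀ M N P : Tm, leB M N → leB (subst0 P M) (subst0 P N)) ∧
    (∀ M N : Tm, leB M N → leB (.lam M) (.lam N)) ∧
    (∀ M₁ M₂ N₁ N₂ : Tm, leB M₁ N₁ → leB M₂ N₂ →
      leB (.app M₁ M₂) (.app N₁ N₂)) := by
  refine ⟨fun M => leB_refl M, fun M N P h h' => leB_trans h h', ?_, ?_, ?_, ?_⟩
  · -- subst0 left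
    intro M N P h σ hσ
    rw [subst0_subst, subst0_subst]
    exact h _ (cons_closing (closed_subst hσ) hσ)
  · -- subst0 right
    intro M N P h σ hσ
    rw [subst0_subst, subst0_subst]
    obtain ⟨m, hm⟩ := exists_closedUnder P
    refine howe_bisimC (howe_subst (howe_refl hm) ?_)
    intro n hn
    cases n with
    | zero =>
        exact howe_of_bisimC_closed (closed_subst hσ) (closed_subst hσ) (h σ hσ)
    | succ n => exact howe_refl (hσ n)
  · -- lam
    intro M N h σ hσ
    rw [subst_lam, subst_lam]
    intro k
    cases k with
    | zero => trivial
    | succ k =>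
        intro M₁ hM
        cases hM
        refine ⟨subst (lifts σ) N, Big.lam _, fun P hP => ?_⟩
        rw [subst0_lifts, subst0_lifts]
        exact h (cons P σ) (cons_closing hP hσ) k
  · -- app
    intro M₁ M₂ N₁ N₂ h1 h2 σ hσ
    refine howe_bisimC (Howe.app
      (howe_of_bisimC_closed (closed_subst hσ) (closed_subst hσ) (h1 σ hσ))
      (howe_of_bisimC_closed (closed_subst hσ) (closed_subst hσ) (h2 σ hσ))
      ⟨closed_subst hσ, closed_subst hσ⟩ (leB_refl _))
end

section
/- Let A be an approximable quasi-applicative transition system. Then the applicative bisimulation preorder coincides with the logical preorder induced by the domain logic L: a ≲^B b iff L(a) ⊆ L(b), where L(a) = {φ ∈ L : a ⊨ φ}. -/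
section QuasiATS

variable {A : Type*}

-- A quasi-applicative transition system `(A, ev)` with `ev : A ⇀ (A → A)`.
variable (ev : A → Option (A → A))

/-- `R` is an applicative bisimulation. -/
def IsAppBisim (R : A → A → Prop) : Prop :=
  ∀ a b, R a b → ∀ f, ev a = some f →
    ∃ g, ev b = some g ∧ ∀ c, R (f c) (g c)

/-- Applicative bisimulation `≲^B`: the greatest fixed point. -/
def AppBisim (a b : A) : Prop :=
  ∃ R, IsAppBisim ev R ∧ R a b

/-- The domain logic `L`: `φ ::= t | φ∧ψ | (φ→ψ)_⊥`. -/
inductive LF : Type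
  | tt : LF
  | and (φ ψ : LF) : LF
  | arr (φ ψ : LF) : LF

/-- Satisfaction: `a ⊨ (φ→ψ)_⊥` iff `a⇓f` and `f` maps `φ` into `ψ`. -/
def satL : A → LF → Prop
  | _, .tt => True
  | a, .and φ ψ => satL a φ ∧ satL a ψ
  | a, .arr φ ψ => ∃ f, ev a = some f ∧ ∀ b, satL b φ → satL (f b) ψ

/-- Convergence of the iterated application `a b₁ … b_n ⇓`. -/
def convApp : A → List A → Prop
  | a, [] => (ev a).isSome
  | a, b :: bs => ∃ f, ev a = some f ∧ convApp (f b) bs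

/-- The formula `(φ₁→⋯(φ_n→λ)_⊥⋯)_⊥` where `λ = (t→t)_⊥`. -/
def arrChain : List LF → LF
  | [] => .arr .tt .tt
  | φ :: φs => .arr φ (arrChain φs)

/-- `(A, ev)` is approximable: convergence of an application is witnessed by
observable properties of the arguments. -/
def Approximable : Prop :=
  ∀ a bs, convApp ev a bs →
    ∃ φs : List LF, List.Forall₂ (satL ev) bs φs ∧ satL ev a (arrChain φs)

end QuasiATS

section Aux

variable {A : Type*} (ev : A → Option (A → A))

/-- Iterated application as a partial function. -/
def applyL : A → List A → Option A
  | a, [] => some a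
  | a, b :: bs => match ev a with
    | none => none
    | some f => applyL (f b) bs

/-- `(ψ₁→⋯(ψ_n→φ)_⊥⋯)_⊥`. -/
def chainTo : List LF → LF → LF
  | [], φ => φ
  | ψ :: ψs, φ => .arr ψ (chainTo ψs φ)

lemma arrChain_eq (ψs : List LF) : arrChain ψs = chainTo ψs (.arr .tt .tt) := by
  induction ψs <;> simp [arrChain, chainTo, *]

lemma applyL_append (a : A) (bs cs : List A) :
    applyL ev a (bs ++ cs) = (applyL ev a bs).bind (fun v => applyL ev v cs) := by
  induction bs generalizing a with
  | nil => simp [applyL]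
  | cons b bs ih => cases h : ev a <;> simp [applyL, h, ih]

lemma sat_chainTo {b : A} {ψs : List LF} {φ : LF} {cs : List A}
    (h : satL ev b (chainTo ψs φ)) (hcs : List.Forall₂ (satL ev) cs ψs) :
    ∃ v, applyL ev b cs = some v ∧ satL ev v φ := by
  induction hcs generalizing b with
  | nil => exact ⟨b, rfl, h⟩
  | cons hc _ ih =>
      obtain ⟨g, hg, hall⟩ := h
      have := ih (hall _ hc)
      simpa [applyL, hg] using this

lemma convApp_iff (a : A) (bs : List A) :
    convApp ev a bs ↔ ∃ v, applyL ev a bs = some v ∧ (ev v).isSome := by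
  induction bs generalizing a with
  | nil => simp [convApp, applyL]
  | cons b bs ih =>
      constructor
      · rintro ⟨f, hf, hc⟩
        obtain ⟨v, hv, h2⟩ := (ih (f b)).mp hc
        exact ⟨v, by simp [applyL, hf, hv], h2⟩
      · rintro ⟨v, hv, h2⟩
        cases hf : ev a with
        | none => simp [applyL, hf] at hv
        | some f =>
            refine ⟨f, hf, (ih (f b)).mpr ⟨v, ?_, h2⟩⟩
            simpa [applyL, hf] using hv

/-- Key lemma: if `L(a) ⊆ L(b)` then any formula satisfied by `a b₁…b_n` is
satisfied by `b b₁…b_n` (which in particular converges). -/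
lemma key (happrox : Approximable ev) {a b : A}
    (hle : ∀ φ, satL ev a φ → satL ev b φ) :
    ∀ (φ : LF) (bs : List A) (u : A), applyL ev a bs = some u → satL ev u φ →
      ∃ v, applyL ev b bs = some v ∧ satL ev v φ := by
  intro φ
  induction φ with
  | tt =>
      intro bs u hu _
      rcases List.eq_nil_or_concat bs with rfl | ⟨cs, c, rfl⟩
      · exact ⟨b, rfl, trivial⟩
      · -- `a cs ⇓`, so approximability gives observable witnesses.
        rw [List.concat_eq_append] at hu ⊢
        rw [applyL_append] at hu
        cases hw : applyL ev a cs with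
        | none => simp [hw] at hu
        | some w =>
          rw [hw] at hu
          have hconv : convApp ev a cs := by
            refine (convApp_iff ev a cs).mpr ⟨w, hw, ?_⟩
            cases hew : ev w with
            | none => simp [applyL, hew] at hu
            | some f => simp [hew]
          obtain ⟨ψs, hψs, hsat⟩ := happrox a cs hconv
          have hbsat := hle _ hsat
          rw [arrChain_eq] at hbsat
          obtain ⟨w', hw', hlam⟩ := sat_chainTo ev hbsat hψs
          obtain ⟨g, hg, -⟩ := hlam
          refine ⟨g c, ?_, trivial⟩
          rw [applyL_append, hw']
          simp [applyL, hg]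
  | and φ₁ φ₂ ih1 ih2 =>
      rintro bs u hu ⟨h1, h2⟩
      obtain ⟨v₁, hv₁, hs₁⟩ := ih1 bs u hu h1
      obtain ⟨v₂, hv₂, hs₂⟩ := ih2 bs u hu h2
      rw [hv₁] at hv₂
      exact ⟨v₁, hv₁, hs₁, by injection hv₂ with h; rw [h]; exact hs₂⟩
  | arr φ₁ φ₂ ih1 ih2 =>
      rintro bs u hu ⟨h, hh, hall⟩
      have hconv : convApp ev a bs := (convApp_iff ev a bs).mpr ⟨u, hu, by simp [hh]⟩
      obtain ⟨ψs, hψs, hsat⟩ := happrox a bs hconv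
      have hbsat := hle _ hsat
      rw [arrChain_eq] at hbsat
      obtain ⟨v, hv, hlam⟩ := sat_chainTo ev hbsat hψs
      obtain ⟨k, hk, -⟩ := hlam
      refine ⟨v, hv, k, hk, ?_⟩
      intro d hd
      have hau : applyL ev a (bs ++ [d]) = some (h d) := by
        rw [applyL_append, hu]; simp [applyL, hh]
      obtain ⟨w, hw, hwφ⟩ := ih2 (bs ++ [d]) (h d) hau (hall d hd)
      have hbv : applyL ev b (bs ++ [d]) = some (k d) := by
        rw [applyL_append, hv]; simp [applyL, hk]
      rw [hbv] at hw
      injection hw with h'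
      rw [h']; exact hwφ

lemma appBisim_isBisim : IsAppBisim ev (AppBisim ev) := by
  rintro a b ⟨R, hR, hab⟩ f hf
  obtain ⟨g, hg, h⟩ := hR a b hab f hf
  exact ⟨g, hg, fun c => ⟨R, hR, h c⟩⟩

lemma sat_mono : ∀ (φ : LF) (a b : A), AppBisim ev a b → satL ev a φ → satL ev b φ := by
  intro φ
  induction φ with
  | tt => intros; trivial
  | and φ ψ ih1 ih2 => rintro a b h ⟨h1, h2⟩; exact ⟨ih1 a b h h1, ih2 a b h h2⟩
  | arr φ ψ ih1 ih2 =>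
      rintro a b h ⟨f, hf, hall⟩
      obtain ⟨g, hg, hc⟩ := appBisim_isBisim ev a b h f hf
      exact ⟨g, hg, fun c hcφ => ih2 _ _ (hc c) (hall c hcφ)⟩

end Aux

/-- Characterisation Theorem: in an approximable quasi-applicative transition
system, applicative bisimulation coincides with the logical preorder of the
domain logic `L`: `a ≲^B b` iff `L(a) ⊆ L(b)`. -/
theorem appBisim_iff_logic {A : Type*} (ev : A → Option (A → A))
    (happrox : Approximable ev) :
    ∀ a b : A, AppBisim ev a b ↔ ∀ φ : LF, satL ev a φ → satL ev b φ := by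
  intro a b
  constructor
  · intro h φ
    exact sat_mono ev φ a b h
  · intro hle
    refine ⟨fun a b => ∀ φ, satL ev a φ → satL ev b φ, ?_, hle⟩
    intro a b hab f hf
    have hblam : satL ev b (.arr .tt .tt) :=
      hab _ ⟨f, hf, fun _ _ => trivial⟩
    obtain ⟨g, hg, -⟩ := hblam
    refine ⟨g, hg, fun c φ hφ => ?_⟩
    have hac : applyL ev a [c] = some (f c) := by simp [applyL, hf]
    obtain ⟨v, hv, hvφ⟩ := key ev happrox hab φ [c] (f c) hac hφ
    have hbc : applyL ev b [c] = some (g c) := by simp [applyL, hg]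
    rw [hbc] at hv
    injection hv with h'
    rw [h']; exact hvφ
end

section
/- Every approximable quasi-applicative transition system is an applicative transition system: if a⇓f and b ≲^B c then f(b) ≲^B f(c). -/
section Aux

variable {A : Type*} (ev : A → Option (A → A))

lemma appBisim_refl (a : A) : AppBisim ev a a := by
  refine ⟨Eq, ?_, rfl⟩
  intro x y hxy f hf
  subst hxy
  exact ⟨f, hf, fun c => rfl⟩

lemma satL_mono : ∀ (φ : LF) (b c : A), AppBisim ev b c → satL ev b φ → satL ev c φ := by
  intro φ
  induction φ with
  | tt => intro b c _ _; trivial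
  | and φ ψ ihφ ihψ =>
    intro b c h hb
    exact ⟨ihφ b c h hb.1, ihψ b c h hb.2⟩
  | arr φ ψ ihφ ihψ =>
    intro b c h hb
    obtain ⟨f, hf, hmap⟩ := hb
    obtain ⟨R, hR, hRbc⟩ := h
    obtain ⟨g, hg, hfg⟩ := hR b c hRbc f hf
    refine ⟨g, hg, fun d hd => ?_⟩
    exact ihψ (f d) (g d) ⟨R, hR, hfg d⟩ (hmap d hd)

/-- Partial chain application: `Chain a bs x` iff `a b₁ … b_n` is defined and equals `x`. -/
def Chain : A → List A → A → Prop
  | a, [], x => x = a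
  | a, b :: bs, x => ∃ f, ev a = some f ∧ Chain (f b) bs x

lemma chain_conv : ∀ (bs : List A) (a x : A), Chain ev a bs x → (ev x).isSome →
    convApp ev a bs := by
  intro bs
  induction bs with
  | nil => intro a x h hx; cases h; exact hx
  | cons b bs ih =>
    intro a x h hx
    obtain ⟨f, hf, hc⟩ := h
    exact ⟨f, hf, ih (f b) x hc hx⟩

lemma chain_snoc : ∀ (bs : List A) (a x : A) (h : A → A) (d : A),
    Chain ev a bs x → ev x = some h → Chain ev a (bs ++ [d]) (h d) := by
  intro bs
  induction bs with
  | nil =>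
    intro a x h d hc hx
    cases hc
    exact ⟨h, hx, rfl⟩
  | cons b bs ih =>
    intro a x h d hc hx
    obtain ⟨f, hf, hc'⟩ := hc
    exact ⟨f, hf, ih (f b) x h d hc' hx⟩

lemma sat_chain : ∀ (φs : List LF) (cs : List A) (a y : A),
    satL ev a (arrChain φs) → List.Forall₂ (satL ev) cs φs → Chain ev a cs y →
    ∃ g, ev y = some g := by
  intro φs
  induction φs with
  | nil =>
    intro cs a y hsat hfa hc
    cases hfa
    cases hc
    obtain ⟨g, hg, -⟩ := hsat
    exact ⟨g, hg⟩
  | cons φ φs ih =>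
    intro cs a y hsat hfa hc
    cases hfa with
    | cons hcφ htail =>
      obtain ⟨f', hf', hmap⟩ := hsat
      obtain ⟨f, hf, hc'⟩ := hc
      rw [hf] at hf'
      cases hf'
      exact ih _ _ y (hmap _ hcφ) htail hc'

end Aux

/-- Every approximable quasi-applicative transition system is an applicative
transition system: if `a⇓f` and `b ≲^B c` then `f(b) ≲^B f(c)`. -/
theorem approximable_is_ats {A : Type*} (ev : A → Option (A → A))
    (happrox : Approximable ev) :
    ∀ (a : A) (f : A → A) (b c : A),
      ev a = some f → AppBisim ev b c → AppBisim ev (f b) (f c) := by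
  intro a f b c hf hbc
  set R : A → A → Prop := fun x y =>
    ∃ a bs cs, List.Forall₂ (AppBisim ev) bs cs ∧ Chain ev a bs x ∧ Chain ev a cs y
    with hRdef
  refine ⟨R, ?_, ⟨a, [b], [c], List.Forall₂.cons hbc List.Forall₂.nil,
    ⟨f, hf, rfl⟩, ⟨f, hf, rfl⟩⟩⟩
  intro x y hxy h hx
  obtain ⟨a₀, bs, cs, hfa, hcb, hcc⟩ := hxy
  -- x converges, so by approximability a₀ bs ⇓
  have hconv : convApp ev a₀ bs := chain_conv ev bs a₀ x hcb (by rw [hx]; rfl)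
  obtain ⟨φs, hsatbs, hsata⟩ := happrox a₀ bs hconv
  -- transfer satisfaction from bs to cs
  have hsatcs : List.Forall₂ (satL ev) cs φs := by
    clear hcb hcc hconv hsata
    induction hfa generalizing φs with
    | nil => cases hsatbs; exact List.Forall₂.nil
    | cons hbc' _ ih =>
      cases hsatbs with
      | cons h1 h2 =>
        exact List.Forall₂.cons (satL_mono ev _ _ _ hbc' h1) (ih _ h2)
  obtain ⟨g, hg⟩ := sat_chain ev φs cs a₀ y hsata hsatcs hcc
  refine ⟨g, hg, fun d => ?_⟩
  exact ⟨a₀, bs ++ [d], cs ++ [d],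
    List.rel_append hfa (List.Forall₂.cons (appBisim_refl ev d) List.Forall₂.nil),
    chain_snoc ev bs a₀ x h d hcb hx, chain_snoc ev cs a₀ y g d hcc hg⟩
end
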